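/- arXiv:1704.06961 — 10 statements merged into one kernel-verified Lean document; each statement's English description precedes it below -/
import Mathlib

section
/- Let X and Y be real Banach spaces and let F : B_X → B_Y be a non-expansive bijection from the closed unit ball of X onto the closed unit ball of Y. Then F(0) = 0. -/
open Metric Set

lemma exists_norm_le_norm_sub_eq_add_norm {E : Type*} [NormedAddCommGroup E] [NormedSpace ℝ E]
    {a : E} (ha : a ≠ 0) {r : ℝ} (hr : 0 ≤ r) :
    ∃ v : E, ‖v‖ ≤ r ∧ ‖v - a‖ = r + ‖a‖ := by
  have hna : 0 < ‖a‖ := norm_pos_iff.mpr ha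
  refine ⟨-((r / ‖a‖) • a), ?_, ?_⟩
  · rw [norm_neg, norm_smul, Real.norm_of_nonneg (by positivity), div_mul_cancel₀ r hna.ne']
  · calc ‖-((r / ‖a‖) • a) - a‖ = ‖(r / ‖a‖ + 1) • a‖ := by
          rw [← norm_neg, add_smul, one_smul, neg_sub, sub_neg_eq_add, add_comm]
      _ = r + ‖a‖ := by
          rw [norm_smul, Real.norm_of_nonneg (by positivity), add_mul, one_mul,
            div_mul_cancel₀ r hna.ne']

theorem nonexpansive_bijection_maps_zero_to_zero_general
    {X Y : Type*} [NormedAddCommGroup X]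
    [NormedAddCommGroup Y] [NormedSpace ℝ Y]
    (F : X → Y)
    (hbij : Set.BijOn F (closedBall (0 : X) 1) (closedBall (0 : Y) 1))
    (hne : ∀ x ∈ closedBall (0 : X) 1, ∀ y ∈ closedBall (0 : X) 1,
      ‖F x - F y‖ ≤ ‖x - y‖) :
    F 0 = 0 := by
  by_contra hF0
  obtain ⟨v, hv, hv_far⟩ := exists_norm_le_norm_sub_eq_add_norm hF0 zero_le_one
  obtain ⟨u, hu, rfl⟩ := hbij.surjOn (mem_closedBall_zero_iff.mpr hv)
  have h0 : (0 : X) ∈ closedBall (0 : X) 1 := mem_closedBall_self zero_le_one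
  have : 1 + ‖F 0‖ ≤ 1 :=
    calc 1 + ‖F 0‖ = ‖F u - F 0‖ := hv_far.symm
      _ ≤ ‖u - 0‖ := hne u hu 0 h0
      _ ≤ 1 := by simpa using mem_closedBall_zero_iff.mp hu
  exact hF0 (norm_le_zero_iff.mp (by linarith))

theorem nonexpansive_bijection_maps_zero_to_zero
    {X Y : Type*} [NormedAddCommGroup X] [NormedSpace ℝ X] [CompleteSpace X]
    [NormedAddCommGroup Y] [NormedSpace ℝ Y] [CompleteSpace Y]
    (F : X → Y)
    (hbij : Set.BijOn F (closedBall (0 : X) 1) (closedBall (0 : Y) 1))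
    (hne : ∀ x ∈ closedBall (0 : X) 1, ∀ y ∈ closedBall (0 : X) 1,
      ‖F x - F y‖ ≤ ‖x - y‖) :
    F 0 = 0 :=
  nonexpansive_bijection_maps_zero_to_zero_general F hbij hne
end

section
/- Let X and Y be real Banach spaces and let F : B_X → B_Y be a non-expansive bijection from the closed unit ball of X onto the closed unit ball of Y. Then the preimage under F of the unit sphere of Y is contained in the unit sphere of X; that is, if x ∈ B_X and ‖F(x)‖ = 1, then ‖x‖ = 1. -/
/-! The antipode `-F x` of a point `F x` of the unit sphere has a preimage `u` in the ball, and
`2 = ‖F u - F x‖ ≤ ‖u - x‖ ≤ ‖u‖ + ‖x‖ ≤ 1 + ‖x‖` forces `‖x‖ ≥ 1`. -/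

open Metric Set

lemma one_le_norm_of_two_le_norm_sub {E : Type*} [SeminormedAddCommGroup E] {u x : E}
    (hu : ‖u‖ ≤ 1) (h : 2 ≤ ‖u - x‖) : 1 ≤ ‖x‖ := by
  linarith [norm_sub_le u x]

lemma norm_neg_sub_self {E : Type*} [SeminormedAddCommGroup E] [NormedSpace ℝ E] (y : E) :
    ‖-y - y‖ = 2 * ‖y‖ := by
  rw [← neg_add', norm_neg, ← two_smul ℝ y, norm_smul, Real.norm_two]

theorem nonexpansive_bijection_preimage_sphere_subset_sphere_general
    {X Y : Type*} [NormedAddCommGroup X]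
    [NormedAddCommGroup Y] [NormedSpace ℝ Y]
    (F : X → Y)
    (hbij : Set.BijOn F (closedBall (0 : X) 1) (closedBall (0 : Y) 1))
    (hne : ∀ x ∈ closedBall (0 : X) 1, ∀ y ∈ closedBall (0 : X) 1,
      ‖F x - F y‖ ≤ ‖x - y‖)
    (x : X) (hx : x ∈ closedBall (0 : X) 1) (hFx : ‖F x‖ = 1) :
    ‖x‖ = 1 := by
  have hantipode : -F x ∈ closedBall (0 : Y) 1 := by simpa using hFx.le
  obtain ⟨u, hu, hFu⟩ := hbij.surjOn hantipode
  refine le_antisymm (mem_closedBall_zero_iff.mp hx)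
    (one_le_norm_of_two_le_norm_sub (mem_closedBall_zero_iff.mp hu) ?_)
  calc 2 = ‖F u - F x‖ := by rw [hFu, norm_neg_sub_self, hFx, mul_one]
    _ ≤ ‖u - x‖ := hne u hu x hx

theorem nonexpansive_bijection_preimage_sphere_subset_sphere
    {X Y : Type*} [NormedAddCommGroup X] [NormedSpace ℝ X] [CompleteSpace X]
    [NormedAddCommGroup Y] [NormedSpace ℝ Y] [CompleteSpace Y]
    (F : X → Y)
    (hbij : Set.BijOn F (closedBall (0 : X) 1) (closedBall (0 : Y) 1))
    (hne : ∀ x ∈ closedBall (0 : X) 1, ∀ y ∈ closedBall (0 : X) 1,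
      ‖F x - F y‖ ≤ ‖x - y‖)
    (x : X) (hx : x ∈ closedBall (0 : X) 1) (hFx : ‖F x‖ = 1) :
    ‖x‖ = 1 :=
  nonexpansive_bijection_preimage_sphere_subset_sphere_general F hbij hne x hx hFx
end

section
/- Let X and Y be real Banach spaces and let F : B_X → B_Y be a non-expansive bijection from the closed unit ball of X onto the closed unit ball of Y. If x ∈ B_X is such that F(x) is an extreme point of B_Y, then F(a·x) = a·F(x) for every a ∈ (0, 1). -/
/-!
A non-expansive map of the unit ball onto the unit ball fixes the origin: otherwise the unit
vector `y = -F 0 / ‖F 0‖` would have a preimage `z` with `1 + ‖F 0‖ = ‖y - F 0‖ ≤ ‖z‖ ≤ 1`.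
Hence `‖F (a • x)‖ ≤ a` and `‖F x - F (a • x)‖ ≤ 1 - a`, so with `d = F (a • x) - a • F x` both
`F x + d = F (a • x) + (1 - a) • F x` and `F x - d = (F x - F (a • x)) + a • F x` lie in the unit
ball. Extremality of `F x` forces `d = 0`.
-/

open Metric Set

section

variable {X Y : Type*} [SeminormedAddCommGroup X] [NormedAddCommGroup Y] [NormedSpace ℝ Y]

theorem map_zero_eq_zero_of_surjOn_closedBall {F : X → Y}
    (hsurj : SurjOn F (closedBall 0 1) (closedBall 0 1))
    (hF : ∀ z ∈ closedBall (0 : X) 1, ‖F z - F 0‖ ≤ ‖z‖) : F 0 = 0 := by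
  by_contra h
  have hpos : 0 < ‖F 0‖ := norm_pos_iff.mpr h
  set y : Y := -(‖F 0‖⁻¹ • F 0)
  have hy : y ∈ closedBall (0 : Y) 1 := by
    rw [mem_closedBall_zero_iff, norm_neg, norm_smul_of_nonneg (inv_nonneg.mpr hpos.le),
      inv_mul_cancel₀ hpos.ne']
  obtain ⟨z, hz, hzy⟩ := hsurj hy
  have hdist : ‖F z - F 0‖ = 1 + ‖F 0‖ := by
    rw [hzy, show y - F 0 = -((‖F 0‖⁻¹ + 1) • F 0) by module, norm_neg,
      norm_smul_of_nonneg (by positivity), add_mul, inv_mul_cancel₀ hpos.ne', one_mul]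
  have hle := hF z hz
  rw [mem_closedBall_zero_iff] at hz
  linarith

theorem eq_smul_of_norm_le_of_norm_sub_le {u v : Y} {a : ℝ} (ha₀ : 0 ≤ a) (ha₁ : a ≤ 1)
    (hu : ‖u‖ ≤ 1)
    (hext : ∀ d : Y, d ≠ 0 → u + d ∉ closedBall (0 : Y) 1 ∨ u - d ∉ closedBall (0 : Y) 1)
    (hv : ‖v‖ ≤ a) (huv : ‖u - v‖ ≤ 1 - a) : v = a • u := by
  by_contra hne
  have hau : ‖a • u‖ ≤ a := by
    rw [norm_smul_of_nonneg ha₀]; exact mul_le_of_le_one_right ha₀ hu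
  have hbu : ‖(1 - a) • u‖ ≤ 1 - a := by
    rw [norm_smul_of_nonneg (sub_nonneg.mpr ha₁)]
    exact mul_le_of_le_one_right (sub_nonneg.mpr ha₁) hu
  rcases hext (v - a • u) (sub_ne_zero.mpr hne) with h | h <;>
    apply h <;> rw [mem_closedBall_zero_iff]
  · calc ‖u + (v - a • u)‖ = ‖v + (1 - a) • u‖ := by congr 1; module
      _ ≤ ‖v‖ + ‖(1 - a) • u‖ := norm_add_le _ _
      _ ≤ 1 := by linarith
  · calc ‖u - (v - a • u)‖ = ‖(u - v) + a • u‖ := by congr 1; module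
      _ ≤ ‖u - v‖ + ‖a • u‖ := norm_add_le _ _
      _ ≤ 1 := by linarith

end

theorem nonexpansive_bijection_extreme_point_homogeneous_general
    {X Y : Type*} [NormedAddCommGroup X] [NormedSpace ℝ X]
    [NormedAddCommGroup Y] [NormedSpace ℝ Y]
    (F : X → Y)
    (hbij : Set.BijOn F (closedBall (0 : X) 1) (closedBall (0 : Y) 1))
    (hne : ∀ x ∈ closedBall (0 : X) 1, ∀ y ∈ closedBall (0 : X) 1,
      ‖F x - F y‖ ≤ ‖x - y‖)
    (x : X) (hx : x ∈ closedBall (0 : X) 1)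
    (hext : F x ∈ closedBall (0 : Y) 1 ∧ ∀ y : Y, y ≠ 0 →
      F x + y ∉ closedBall (0 : Y) 1 ∨ F x - y ∉ closedBall (0 : Y) 1) :
    ∀ a ∈ Set.Ioo (0 : ℝ) 1, F (a • x) = a • F x := by
  rintro a ⟨ha₀, ha₁⟩
  have h0 : (0 : X) ∈ closedBall 0 1 := mem_closedBall_self zero_le_one
  have hF0 : F 0 = 0 :=
    map_zero_eq_zero_of_surjOn_closedBall hbij.surjOn fun z hz => by
      simpa using hne z hz 0 h0
  rw [mem_closedBall_zero_iff] at hx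
  have hax : a • x ∈ closedBall (0 : X) 1 := by
    rw [mem_closedBall_zero_iff, norm_smul_of_nonneg ha₀.le]
    nlinarith [norm_nonneg x]
  refine eq_smul_of_norm_le_of_norm_sub_le ha₀.le ha₁.le
    (mem_closedBall_zero_iff.mp hext.1) hext.2 ?_ ?_
  · calc ‖F (a • x)‖ = ‖F (a • x) - F 0‖ := by rw [hF0, sub_zero]
      _ ≤ ‖a • x‖ := by simpa using hne _ hax 0 h0
      _ ≤ a := by rw [norm_smul_of_nonneg ha₀.le]; exact mul_le_of_le_one_right ha₀.le hx
  · calc ‖F x - F (a • x)‖ ≤ ‖x - a • x‖ := hne x (mem_closedBall_zero_iff.mpr hx) _ hax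
      _ = (1 - a) * ‖x‖ := by
        rw [show x - a • x = (1 - a) • x by module, norm_smul_of_nonneg (by linarith)]
      _ ≤ 1 - a := mul_le_of_le_one_right (by linarith) hx

theorem nonexpansive_bijection_extreme_point_homogeneous
    {X Y : Type*} [NormedAddCommGroup X] [NormedSpace ℝ X] [CompleteSpace X]
    [NormedAddCommGroup Y] [NormedSpace ℝ Y] [CompleteSpace Y]
    (F : X → Y)
    (hbij : Set.BijOn F (closedBall (0 : X) 1) (closedBall (0 : Y) 1))
    (hne : ∀ x ∈ closedBall (0 : X) 1, ∀ y ∈ closedBall (0 : X) 1,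
      ‖F x - F y‖ ≤ ‖x - y‖)
    (x : X) (hx : x ∈ closedBall (0 : X) 1)
    (hext : F x ∈ closedBall (0 : Y) 1 ∧ ∀ y : Y, y ≠ 0 →
      F x + y ∉ closedBall (0 : Y) 1 ∨ F x - y ∉ closedBall (0 : Y) 1) :
    ∀ a ∈ Set.Ioo (0 : ℝ) 1, F (a • x) = a • F x :=
  nonexpansive_bijection_extreme_point_homogeneous_general F hbij hne x hx hext
end

section
/- Let X and Y be real Banach spaces and let F : B_X → B_Y be a non-expansive bijection from the closed unit ball of X onto the closed unit ball of Y. If x ∈ B_X is such that F(x) is an extreme point of B_Y, then x is an extreme point of B_X. -/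
/-!
A non-expansive surjection `F` of `B_X` onto `B_Y` fixes `0`: a preimage of the unit vector
opposite to `F 0` would otherwise be moved more than distance `1` away from the image of `0`.
Hence if `x + y, x - y ∈ B_X`, the points `x / 2` and `(x + y) / 2` both lie within `1 / 2` of `0`
and of `x`, so their images lie within `1 / 2` of `0` and of `F x`. When `F x` is extreme, `F x / 2`
is the only such point of `Y`, and injectivity of `F` forces `y = 0`.
-/

open Metric Set

theorem eq_inv_two_smul_of_extreme_closedBall {Y : Type*} [NormedAddCommGroup Y] [NormedSpace ℝ Y]
    {r : ℝ} {u q : Y}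
    (hu : ∀ z : Y, z ≠ 0 → u + z ∉ closedBall (0 : Y) r ∨ u - z ∉ closedBall (0 : Y) r)
    (hq : ‖q‖ ≤ r / 2) (huq : ‖u - q‖ ≤ r / 2) :
    q = (2⁻¹ : ℝ) • u := by
  by_contra hne
  have hz : (2 : ℝ) • q - u ≠ 0 := fun h ↦ hne (by rw [← sub_eq_zero.mp h, smul_smul]; norm_num)
  rcases hu _ hz with h | h
  · refine h (mem_closedBall_zero_iff.mpr ?_)
    rw [add_sub_cancel, norm_smul, Real.norm_two]
    linarith
  · refine h (mem_closedBall_zero_iff.mpr ?_)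
    rw [show u - ((2 : ℝ) • q - u) = (2 : ℝ) • (u - q) by module, norm_smul, Real.norm_two]
    linarith

theorem map_zero_of_surjOn_closedBall {X Y : Type*} [SeminormedAddCommGroup X]
    [NormedAddCommGroup Y] [NormedSpace ℝ Y] {F : X → Y} {r : ℝ} (hr : 0 ≤ r)
    (hsurj : SurjOn F (closedBall (0 : X) r) (closedBall (0 : Y) r))
    (hF : LipschitzOnWith 1 F (closedBall (0 : X) r)) :
    F 0 = 0 := by
  by_contra hc
  have hc' : 0 < ‖F 0‖ := norm_pos_iff.mpr hc
  set q : Y := -((r / ‖F 0‖) • F 0)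
  have hq : ‖q‖ = r := by
    rw [norm_neg, norm_smul, Real.norm_of_nonneg (by positivity), div_mul_cancel₀ _ hc'.ne']
  obtain ⟨p, hp, hpq⟩ := hsurj (mem_closedBall_zero_iff.mpr hq.le)
  have hfar : ‖F p - F 0‖ = r + ‖F 0‖ := by
    rw [hpq, show q - F 0 = -((r / ‖F 0‖ + 1) • F 0) by module, norm_neg, norm_smul,
      Real.norm_of_nonneg (by positivity), add_mul, div_mul_cancel₀ _ hc'.ne', one_mul]
  have hclose := hF.norm_sub_le hp (mem_closedBall_self hr)
  rw [hfar, NNReal.coe_one, one_mul, sub_zero] at hclose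
  linarith [mem_closedBall_zero_iff.mp hp]

theorem norm_inv_two_smul_le {X : Type*} [SeminormedAddCommGroup X] [NormedSpace ℝ X] {r : ℝ}
    {b : X} (hb : b ∈ closedBall (0 : X) r) : ‖(2⁻¹ : ℝ) • b‖ ≤ r / 2 := by
  rw [norm_smul, norm_inv, Real.norm_two]
  linarith [mem_closedBall_zero_iff.mp hb]

theorem inv_two_smul_mem_closedBall {X : Type*} [SeminormedAddCommGroup X] [NormedSpace ℝ X]
    {r : ℝ} {b : X} (hb : b ∈ closedBall (0 : X) r) : (2⁻¹ : ℝ) • b ∈ closedBall (0 : X) r :=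
  mem_closedBall_zero_iff.mpr <| (norm_inv_two_smul_le hb).trans <| by
    linarith [(norm_nonneg b).trans (mem_closedBall_zero_iff.mp hb)]

theorem apply_inv_two_smul_eq_of_extreme {X Y : Type*} [SeminormedAddCommGroup X]
    [NormedSpace ℝ X] [NormedAddCommGroup Y] [NormedSpace ℝ Y] {F : X → Y} {r : ℝ}
    (hF0 : F 0 = 0) (hF : LipschitzOnWith 1 F (closedBall (0 : X) r)) {x a : X}
    (hext : ∀ z : Y, z ≠ 0 → F x + z ∉ closedBall (0 : Y) r ∨ F x - z ∉ closedBall (0 : Y) r)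
    (hx : x ∈ closedBall (0 : X) r) (ha : a ∈ closedBall (0 : X) r)
    (ha' : (2 : ℝ) • x - a ∈ closedBall (0 : X) r) :
    F ((2⁻¹ : ℝ) • a) = (2⁻¹ : ℝ) • F x := by
  have hF' : ∀ b ∈ closedBall (0 : X) r, ‖F ((2⁻¹ : ℝ) • a) - F b‖ ≤ ‖(2⁻¹ : ℝ) • a - b‖ :=
    fun b hb ↦ by simpa using hF.norm_sub_le (inv_two_smul_mem_closedBall ha) hb
  apply eq_inv_two_smul_of_extreme_closedBall hext
  · have h0 : (0 : X) ∈ closedBall (0 : X) r :=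
      mem_closedBall_self ((norm_nonneg a).trans (mem_closedBall_zero_iff.mp ha))
    have h := hF' 0 h0
    rw [hF0, sub_zero, sub_zero] at h
    exact h.trans (norm_inv_two_smul_le ha)
  · calc ‖F x - F ((2⁻¹ : ℝ) • a)‖ ≤ ‖(2⁻¹ : ℝ) • a - x‖ := norm_sub_rev (F x) _ ▸ hF' x hx
      _ = ‖(2⁻¹ : ℝ) • ((2 : ℝ) • x - a)‖ := by rw [← norm_neg]; congr 1; module
      _ ≤ r / 2 := norm_inv_two_smul_le ha'

theorem nonexpansive_bijection_extreme_point_preimage_extreme_general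
    {X Y : Type*} [NormedAddCommGroup X] [NormedSpace ℝ X]
    [NormedAddCommGroup Y] [NormedSpace ℝ Y]
    (F : X → Y)
    (hbij : Set.BijOn F (closedBall (0 : X) 1) (closedBall (0 : Y) 1))
    (hne : ∀ x ∈ closedBall (0 : X) 1, ∀ y ∈ closedBall (0 : X) 1,
      ‖F x - F y‖ ≤ ‖x - y‖)
    (x : X) (hx : x ∈ closedBall (0 : X) 1)
    (hext : F x ∈ closedBall (0 : Y) 1 ∧ ∀ y : Y, y ≠ 0 →
      F x + y ∉ closedBall (0 : Y) 1 ∨ F x - y ∉ closedBall (0 : Y) 1) :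
    x ∈ closedBall (0 : X) 1 ∧ ∀ y : X, y ≠ 0 →
      x + y ∉ closedBall (0 : X) 1 ∨ x - y ∉ closedBall (0 : X) 1 := by
  refine ⟨hx, fun y hy ↦ ?_⟩
  by_contra! hxy
  have hF : LipschitzOnWith 1 F (closedBall (0 : X) 1) :=
    LipschitzOnWith.of_dist_le_mul fun a ha b hb ↦ by simpa [dist_eq_norm] using hne a ha b hb
  have hF0 : F 0 = 0 := map_zero_of_surjOn_closedBall zero_le_one hbij.surjOn hF
  have hmid₀ := apply_inv_two_smul_eq_of_extreme hF0 hF hext.2 hx hx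
    (by rwa [two_smul, add_sub_cancel_right])
  have hmid₁ := apply_inv_two_smul_eq_of_extreme hF0 hF hext.2 hx hxy.1
    (by rw [two_smul, add_sub_add_left_eq_sub]; exact hxy.2)
  have heq := hbij.injOn (inv_two_smul_mem_closedBall hx) (inv_two_smul_mem_closedBall hxy.1)
    (hmid₀.trans hmid₁.symm)
  rw [smul_right_injective X (by norm_num : (2⁻¹ : ℝ) ≠ 0) |>.eq_iff] at heq
  exact hy (by simpa using heq)

theorem nonexpansive_bijection_extreme_point_preimage_extreme
    {X Y : Type*} [NormedAddCommGroup X] [NormedSpace ℝ X] [CompleteSpace X]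
    [NormedAddCommGroup Y] [NormedSpace ℝ Y] [CompleteSpace Y]
    (F : X → Y)
    (hbij : Set.BijOn F (closedBall (0 : X) 1) (closedBall (0 : Y) 1))
    (hne : ∀ x ∈ closedBall (0 : X) 1, ∀ y ∈ closedBall (0 : X) 1,
      ‖F x - F y‖ ≤ ‖x - y‖)
    (x : X) (hx : x ∈ closedBall (0 : X) 1)
    (hext : F x ∈ closedBall (0 : Y) 1 ∧ ∀ y : Y, y ≠ 0 →
      F x + y ∉ closedBall (0 : Y) 1 ∨ F x - y ∉ closedBall (0 : Y) 1) :
    x ∈ closedBall (0 : X) 1 ∧ ∀ y : X, y ≠ 0 →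
      x + y ∉ closedBall (0 : X) 1 ∨ x - y ∉ closedBall (0 : X) 1 :=
  nonexpansive_bijection_extreme_point_preimage_extreme_general F hbij hne x hx hext
end

section
/- Let X be a real Banach space, Y a strictly convex real Banach space, and let F : B_X → B_Y be a non-expansive bijection from the closed unit ball of X onto the closed unit ball of Y. Then F maps the unit sphere S_X bijectively onto the unit sphere S_Y. -/
/-!
Antipodal points of `S_Y` are at distance `2`, so their preimages are at distance `≥ 2` and
must both lie on `S_X`; this gives surjectivity onto `S_Y`. The same trick applied to `F 0`
shows `F 0 = 0`. Then for `‖x‖ ≤ 1` with `‖F x‖ = 1`, the point `F (t • x)` is within `t` of `0`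
and within `1 - t` of `F x`, which in a strictly convex space forces `F (t • x) = t • F x`.
Finally, if `‖x‖ = 1` and `w = F x`, the preimage `x₁` of `w / ‖w‖` satisfies
`F (‖w‖ • x₁) = w`, so by injectivity `x = ‖w‖ • x₁` and `‖w‖ = 1`.
-/

open Metric Set

section StrictConvex

variable {E : Type*} [NormedAddCommGroup E] [NormedSpace ℝ E] [StrictConvexSpace ℝ E]

theorem eq_smul_of_norm_le_of_norm_sub_le_s5 {y w : E} {t : ℝ} (hw : ‖w‖ ≤ t * ‖y‖)
    (hyw : ‖y - w‖ ≤ (1 - t) * ‖y‖) : w = t • y := by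
  have htri : ‖y‖ ≤ ‖w‖ + ‖y - w‖ := norm_le_insert' y w
  have hline :=
    eq_lineMap_of_dist_eq_mul_of_dist_eq_mul (x := (0 : E)) (y := w) (z := y) (r := t)
    (by rw [dist_zero_left, dist_zero_left]; linarith)
    (by rw [dist_comm, dist_eq_norm, dist_zero_left]; linarith)
  rwa [AffineMap.lineMap_apply_module, smul_zero, zero_add] at hline

end StrictConvex

section Nonexpansive

variable {X Y : Type*} [NormedAddCommGroup X] [NormedAddCommGroup Y] [NormedSpace ℝ Y]
  {F : X → Y}

theorem norm_eq_one_of_norm_map_eq_one (hF : LipschitzOnWith 1 F (closedBall 0 1))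
    (hsurj : SurjOn F (closedBall 0 1) (closedBall 0 1)) {x : X} (hx : x ∈ closedBall 0 1)
    (hFx : ‖F x‖ = 1) : ‖x‖ = 1 := by
  obtain ⟨x', hx', hFx'⟩ := hsurj (a := -F x) (by simp [hFx])
  have hx_le : ‖x‖ ≤ 1 := mem_closedBall_zero_iff.1 hx
  have hx'_le : ‖x'‖ ≤ 1 := mem_closedBall_zero_iff.1 hx'
  have : 2 ≤ ‖x‖ + ‖x'‖ :=
    calc (2 : ℝ) = ‖F x - F x'‖ := by
          rw [hFx', sub_neg_eq_add, ← two_smul ℝ, norm_smul, hFx]; simp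
      _ ≤ ‖x - x'‖ := by simpa using hF.norm_sub_le hx hx'
      _ ≤ ‖x‖ + ‖x'‖ := norm_sub_le x x'
  linarith

theorem map_zero_eq_zero_of_surjOn (hF : LipschitzOnWith 1 F (closedBall 0 1))
    (hsurj : SurjOn F (closedBall 0 1) (closedBall 0 1)) : F 0 = 0 := by
  by_contra h0
  have hpos : 0 < ‖F 0‖ := norm_pos_iff.2 h0
  -- the unit vector pointing away from `F 0` is at distance `1 + ‖F 0‖` from it
  obtain ⟨x', hx', hFx'⟩ := hsurj (a := -(‖F 0‖⁻¹ • F 0))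
    (by simp [norm_smul, inv_mul_cancel₀ hpos.ne'])
  have : 1 + ‖F 0‖ ≤ 1 :=
    calc 1 + ‖F 0‖ = ‖F x' - F 0‖ := by
          rw [hFx', show -(‖F 0‖⁻¹ • F 0) - F 0 = -((‖F 0‖⁻¹ + 1) • F 0) by module,
            norm_neg, norm_smul, Real.norm_of_nonneg (by positivity), add_mul,
            inv_mul_cancel₀ hpos.ne', one_mul]
      _ ≤ ‖x' - 0‖ := by simpa using hF.norm_sub_le hx' (mem_closedBall_self zero_le_one)
      _ ≤ 1 := by simpa using hx'
  linarith

theorem map_smul_of_norm_map_eq_one [NormedSpace ℝ X] [StrictConvexSpace ℝ Y]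
    (hF : LipschitzOnWith 1 F (closedBall 0 1)) (h0 : F 0 = 0) {x : X}
    (hx : x ∈ closedBall 0 1) (hFx : ‖F x‖ = 1) {t : ℝ} (ht₀ : 0 ≤ t) (ht₁ : t ≤ 1) :
    F (t • x) = t • F x := by
  have hx_le : ‖x‖ ≤ 1 := mem_closedBall_zero_iff.1 hx
  have htx : t • x ∈ closedBall 0 1 := by
    rw [mem_closedBall_zero_iff, norm_smul, Real.norm_of_nonneg ht₀]
    nlinarith
  refine eq_smul_of_norm_le_of_norm_sub_le_s5 ?_ ?_
  · calc ‖F (t • x)‖ = ‖F (t • x) - F 0‖ := by rw [h0, sub_zero]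
      _ ≤ ‖t • x - 0‖ := by simpa using hF.norm_sub_le htx (mem_closedBall_self zero_le_one)
      _ ≤ t * ‖F x‖ := by
        rw [sub_zero, norm_smul, Real.norm_of_nonneg ht₀, hFx]; nlinarith
  · calc ‖F x - F (t • x)‖ ≤ ‖x - t • x‖ := by simpa using hF.norm_sub_le hx htx
      _ ≤ (1 - t) * ‖F x‖ := by
        rw [show x - t • x = (1 - t) • x by module, norm_smul,
          Real.norm_of_nonneg (by linarith), hFx]
        nlinarith

theorem surjOn_sphere_of_surjOn_closedBall (hF : LipschitzOnWith 1 F (closedBall 0 1))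
    (hsurj : SurjOn F (closedBall 0 1) (closedBall 0 1)) :
    SurjOn F (sphere 0 1) (sphere 0 1) := by
  intro y hy
  have hy1 : ‖y‖ = 1 := mem_sphere_zero_iff_norm.1 hy
  obtain ⟨x, hx, rfl⟩ := hsurj (sphere_subset_closedBall hy)
  exact ⟨x, mem_sphere_zero_iff_norm.2 (norm_eq_one_of_norm_map_eq_one hF hsurj hx hy1), rfl⟩

theorem mapsTo_sphere_of_bijOn_closedBall [NormedSpace ℝ X] [StrictConvexSpace ℝ Y]
    (hF : LipschitzOnWith 1 F (closedBall 0 1))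
    (hbij : BijOn F (closedBall 0 1) (closedBall 0 1)) :
    MapsTo F (sphere 0 1) (sphere 0 1) := by
  intro x hx
  have hxB : x ∈ closedBall 0 1 := sphere_subset_closedBall hx
  have h0 : F 0 = 0 := map_zero_eq_zero_of_surjOn hF hbij.surjOn
  set w := F x
  have hw_pos : 0 < ‖w‖ := by
    refine norm_pos_iff.2 fun hw => ?_
    have : x = 0 := hbij.injOn hxB (mem_closedBall_self zero_le_one) (hw.trans h0.symm)
    simp [this] at hx
  have hw_le : ‖w‖ ≤ 1 := mem_closedBall_zero_iff.1 (hbij.mapsTo hxB)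
  obtain ⟨x₁, hx₁, hFx₁⟩ := hbij.surjOn (a := ‖w‖⁻¹ • w)
    (by simp [norm_smul, inv_mul_cancel₀ hw_pos.ne'])
  have hFx₁_norm : ‖F x₁‖ = 1 := by simp [hFx₁, norm_smul, inv_mul_cancel₀ hw_pos.ne']
  have hx₁_norm : ‖x₁‖ = 1 := norm_eq_one_of_norm_map_eq_one hF hbij.surjOn hx₁ hFx₁_norm
  have hwx₁ : ‖w‖ • x₁ ∈ closedBall 0 1 := by
    rwa [mem_closedBall_zero_iff, norm_smul, norm_norm, hx₁_norm, mul_one]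
  have hF_wx₁ : F (‖w‖ • x₁) = w := by
    rw [map_smul_of_norm_map_eq_one hF h0 hx₁ hFx₁_norm (norm_nonneg w) hw_le, hFx₁,
      smul_smul, mul_inv_cancel₀ hw_pos.ne', one_smul]
  have hx_eq : x = ‖w‖ • x₁ := hbij.injOn hxB hwx₁ hF_wx₁.symm
  rw [mem_sphere_zero_iff_norm] at hx ⊢
  rwa [hx_eq, norm_smul, norm_norm, hx₁_norm, mul_one] at hx

end Nonexpansive

theorem nonexpansive_bijection_strictly_convex_maps_sphere_bijectively_general
    {X Y : Type*} [NormedAddCommGroup X] [NormedSpace ℝ X]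
    [NormedAddCommGroup Y] [NormedSpace ℝ Y]
    [StrictConvexSpace ℝ Y]
    (F : X → Y)
    (hbij : Set.BijOn F (closedBall (0 : X) 1) (closedBall (0 : Y) 1))
    (hne : ∀ x ∈ closedBall (0 : X) 1, ∀ y ∈ closedBall (0 : X) 1,
      ‖F x - F y‖ ≤ ‖x - y‖) :
    Set.BijOn F (sphere (0 : X) 1) (sphere (0 : Y) 1) := by
  have hF : LipschitzOnWith 1 F (closedBall 0 1) :=
    lipschitzOnWith_iff_norm_sub_le.2 fun x hx y hy => by simpa using hne x hx y hy
  exact ⟨mapsTo_sphere_of_bijOn_closedBall hF hbij, hbij.injOn.mono sphere_subset_closedBall,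
    surjOn_sphere_of_surjOn_closedBall hF hbij.surjOn⟩

theorem nonexpansive_bijection_strictly_convex_maps_sphere_bijectively
    {X Y : Type*} [NormedAddCommGroup X] [NormedSpace ℝ X] [CompleteSpace X]
    [NormedAddCommGroup Y] [NormedSpace ℝ Y] [CompleteSpace Y]
    [StrictConvexSpace ℝ Y]
    (F : X → Y)
    (hbij : Set.BijOn F (closedBall (0 : X) 1) (closedBall (0 : Y) 1))
    (hne : ∀ x ∈ closedBall (0 : X) 1, ∀ y ∈ closedBall (0 : X) 1,
      ‖F x - F y‖ ≤ ‖x - y‖) :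
    Set.BijOn F (sphere (0 : X) 1) (sphere (0 : Y) 1) :=
  nonexpansive_bijection_strictly_convex_maps_sphere_bijectively_general F hbij hne
end

section
/- Let X be a real Banach space, Y a strictly convex real Banach space, and let F : B_X → B_Y be a non-expansive bijection from the closed unit ball of X onto the closed unit ball of Y. Then F(−x) = −F(x) for every x ∈ S_X. -/
/-! Strict convexity of `Y` forces a point at distance `≤ 1 - t` from `y` and `≤ 1 + t`
from `-y`, where `‖y‖ = 1`, to be `t • y`. Applied through the non-expansive `F` to
preimages `a`, `b` of `y`, `-y`, this gives `F 0 = 0` and `F (midpoint a b) = 0`, hence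
`b = -a`, and then `F (t • a) = t • y` for `t ∈ [-1, 1]`. For `‖x‖ = 1` and `a` a preimage
of `F x / ‖F x‖`, injectivity yields `x = ‖F x‖ • a`, so `‖F x‖ = 1` and
`F (-x) = -F x`. -/

open Metric Set

theorem eq_smul_of_dist_le_of_dist_neg_le {Y : Type*} [NormedAddCommGroup Y] [NormedSpace ℝ Y]
    [StrictConvexSpace ℝ Y] {y w : Y} {t : ℝ}
    (h₁ : dist y w ≤ (1 - t) * ‖y‖) (h₂ : dist w (-y) ≤ (1 + t) * ‖y‖) : w = t • y := by
  have hdist : dist y (-y) = 2 * ‖y‖ := by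
    rw [dist_eq_norm, sub_neg_eq_add, ← two_smul ℝ, norm_smul, Real.norm_two]
  have htri := dist_triangle y w (-y)
  have hw : w = AffineMap.lineMap y (-y) ((1 - t) / 2) := by
    apply eq_lineMap_of_dist_eq_mul_of_dist_eq_mul <;> rw [hdist] <;> linarith
  rw [hw, AffineMap.lineMap_apply_module]
  module

namespace LipschitzOnWith

variable {X Y : Type*} [NormedAddCommGroup Y] [NormedSpace ℝ Y] [StrictConvexSpace ℝ Y]

theorem apply_eq_smul_of_dist_le [PseudoMetricSpace X] {s : Set X} {F : X → Y}
    (hF : LipschitzOnWith 1 F s) {a b z : X} (ha : a ∈ s) (hb : b ∈ s) (hz : z ∈ s) {y : Y}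
    (hy : ‖y‖ = 1) (hFa : F a = y) (hFb : F b = -y) {t : ℝ} (hza : dist z a ≤ 1 - t)
    (hzb : dist z b ≤ 1 + t) : F z = t • y := by
  have hF' : ∀ p ∈ s, ∀ q ∈ s, dist (F p) (F q) ≤ dist p q := by
    simpa only [NNReal.coe_one, one_mul] using hF.dist_le_mul
  apply eq_smul_of_dist_le_of_dist_neg_le
  · rw [hy, mul_one, ← hFa, dist_comm]
    exact (hF' z hz a ha).trans hza
  · rw [hy, mul_one, ← hFb]
    exact (hF' z hz b hb).trans hzb

variable [NormedAddCommGroup X] {F : X → Y}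

theorem apply_smul_of_apply_neg [NormedSpace ℝ X] (hF : LipschitzOnWith 1 F (closedBall 0 1))
    {a : X} (ha : a ∈ closedBall 0 1) (hFa : ‖F a‖ = 1) (hFna : F (-a) = -F a) {t : ℝ}
    (ht : t ∈ Icc (-1) 1) : F (t • a) = t • F a := by
  rw [mem_closedBall_zero_iff] at ha
  have hta : t • a ∈ closedBall 0 1 := by
    rw [mem_closedBall_zero_iff, norm_smul, Real.norm_eq_abs]
    exact mul_le_one₀ (abs_le.mpr ht) (norm_nonneg a) ha
  refine hF.apply_eq_smul_of_dist_le (by simpa) (by simpa) hta hFa rfl hFna ?_ ?_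
  · rw [dist_eq_norm, show t • a - a = (t - 1) • a by module, norm_smul, Real.norm_eq_abs,
      abs_of_nonpos (by linarith [ht.2])]
    nlinarith [ht.2, norm_nonneg a]
  · rw [dist_eq_norm, show t • a - -a = (t + 1) • a by module, norm_smul, Real.norm_eq_abs,
      abs_of_nonneg (by linarith [ht.1])]
    nlinarith [ht.1, norm_nonneg a]

theorem apply_zero_eq_zero_of_surjOn [Nontrivial Y] (hF : LipschitzOnWith 1 F (closedBall 0 1))
    (hsurj : SurjOn F (closedBall 0 1) (closedBall 0 1)) : F 0 = 0 := by
  obtain ⟨y, hy⟩ := exists_norm_eq Y zero_le_one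
  obtain ⟨a, ha, hFa⟩ := hsurj (mem_closedBall_zero_iff.mpr hy.le)
  obtain ⟨b, hb, hFb⟩ := hsurj (mem_closedBall_zero_iff.mpr (by rw [norm_neg, hy]))
  simpa using hF.apply_eq_smul_of_dist_le ha hb (mem_closedBall_self zero_le_one) hy hFa hFb
    (t := 0) (by simpa using ha) (by simpa using hb)

theorem apply_neg_of_norm_apply_eq_one [NormedSpace ℝ X]
    (hF : LipschitzOnWith 1 F (closedBall 0 1)) (hinj : InjOn F (closedBall 0 1))
    (hsurj : SurjOn F (closedBall 0 1) (closedBall 0 1))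
    {a : X} (ha : a ∈ closedBall 0 1) (hFa : ‖F a‖ = 1) : F (-a) = -F a := by
  have : Nontrivial Y := nontrivial_of_ne (F a) 0 (norm_ne_zero_iff.mp (by simp [hFa]))
  obtain ⟨b, hb, hFb⟩ := hsurj (mem_closedBall_zero_iff.mpr (by rw [norm_neg, hFa]))
  have hm : midpoint ℝ a b ∈ closedBall 0 1 := (convex_closedBall 0 1).midpoint_mem ha hb
  have hab : dist a b ≤ 2 := by
    rw [mem_closedBall_zero_iff] at ha hb
    linarith [dist_le_norm_add_norm a b]
  have hFm : F (midpoint ℝ a b) = F 0 := by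
    rw [hF.apply_zero_eq_zero_of_surjOn hsurj]
    simpa using hF.apply_eq_smul_of_dist_le ha hb hm hFa rfl hFb (t := 0)
      (by rw [dist_midpoint_left]; norm_num; linarith)
      (by rw [dist_midpoint_right]; norm_num; linarith)
  have hba : b = -a := by
    simpa [midpoint_eq_iff, Equiv.pointReflection_apply, eq_comm] using
      hinj hm (mem_closedBall_self zero_le_one) hFm
  rwa [← hba]

theorem norm_apply_eq_one_of_bijOn [NormedSpace ℝ X]
    (hF : LipschitzOnWith 1 F (closedBall 0 1))
    (hbij : BijOn F (closedBall 0 1) (closedBall 0 1)) {x : X} (hx : ‖x‖ = 1) : ‖F x‖ = 1 := by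
  have hxB : x ∈ closedBall 0 1 := mem_closedBall_zero_iff.mpr hx.le
  have h0B : (0 : X) ∈ closedBall 0 1 := mem_closedBall_self zero_le_one
  have hFx0 : F x ≠ F 0 := fun h ↦ by simp [hbij.injOn hxB h0B h] at hx
  have : Nontrivial Y := nontrivial_of_ne _ _ hFx0
  rw [hF.apply_zero_eq_zero_of_surjOn hbij.surjOn] at hFx0
  have hFx1 : ‖F x‖ ≤ 1 := mem_closedBall_zero_iff.mp (hbij.mapsTo hxB)
  have hFx_pos : 0 < ‖F x‖ := norm_pos_iff.mpr hFx0
  have hdir : ‖‖F x‖⁻¹ • F x‖ = 1 := by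
    rw [norm_smul, norm_inv, norm_norm, inv_mul_cancel₀ hFx_pos.ne']
  obtain ⟨a, ha, hFa⟩ := hbij.surjOn (mem_closedBall_zero_iff.mpr hdir.le)
  have hFa1 : ‖F a‖ = 1 := hFa ▸ hdir
  have hFta : F (‖F x‖ • a) = F x := by
    rw [hF.apply_smul_of_apply_neg ha hFa1
      (hF.apply_neg_of_norm_apply_eq_one hbij.injOn hbij.surjOn ha hFa1)
      ⟨by linarith, hFx1⟩, hFa, smul_inv_smul₀ hFx_pos.ne']
  have hta : ‖F x‖ • a ∈ closedBall 0 1 := by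
    rw [mem_closedBall_zero_iff, norm_smul, norm_norm]
    exact mul_le_one₀ hFx1 (norm_nonneg a) (mem_closedBall_zero_iff.mp ha)
  have hxa : x = ‖F x‖ • a := hbij.injOn hxB hta hFta.symm
  refine le_antisymm hFx1 ?_
  calc 1 = ‖x‖ := hx.symm
    _ = ‖‖F x‖ • a‖ := congrArg norm hxa
    _ = ‖F x‖ * ‖a‖ := by rw [norm_smul, norm_norm]
    _ ≤ ‖F x‖ := mul_le_of_le_one_right hFx_pos.le (mem_closedBall_zero_iff.mp ha)

end LipschitzOnWith

theorem nonexpansive_bijection_strictly_convex_odd_on_sphere_general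
    {X Y : Type*} [NormedAddCommGroup X] [NormedSpace ℝ X]
    [NormedAddCommGroup Y] [NormedSpace ℝ Y]
    [StrictConvexSpace ℝ Y]
    (F : X → Y)
    (hbij : Set.BijOn F (closedBall (0 : X) 1) (closedBall (0 : Y) 1))
    (hne : ∀ x ∈ closedBall (0 : X) 1, ∀ y ∈ closedBall (0 : X) 1,
      ‖F x - F y‖ ≤ ‖x - y‖) :
    ∀ x ∈ sphere (0 : X) 1, F (-x) = -F x := by
  intro x hx
  rw [mem_sphere_zero_iff_norm] at hx
  have hF : LipschitzOnWith 1 F (closedBall 0 1) :=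
    LipschitzOnWith.of_dist_le_mul fun p hp q hq ↦ by
      simpa only [NNReal.coe_one, one_mul, dist_eq_norm] using hne p hp q hq
  exact hF.apply_neg_of_norm_apply_eq_one hbij.injOn hbij.surjOn
    (mem_closedBall_zero_iff.mpr hx.le) (hF.norm_apply_eq_one_of_bijOn hbij hx)

theorem nonexpansive_bijection_strictly_convex_odd_on_sphere
    {X Y : Type*} [NormedAddCommGroup X] [NormedSpace ℝ X] [CompleteSpace X]
    [NormedAddCommGroup Y] [NormedSpace ℝ Y] [CompleteSpace Y]
    [StrictConvexSpace ℝ Y]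
    (F : X → Y)
    (hbij : Set.BijOn F (closedBall (0 : X) 1) (closedBall (0 : Y) 1))
    (hne : ∀ x ∈ closedBall (0 : X) 1, ∀ y ∈ closedBall (0 : X) 1,
      ‖F x - F y‖ ≤ ‖x - y‖) :
    ∀ x ∈ sphere (0 : X) 1, F (-x) = -F x :=
  nonexpansive_bijection_strictly_convex_odd_on_sphere_general F hbij hne
end

section
/- Let X and Y be real Banach spaces and let F : B_X → B_Y be a non-expansive bijection from the closed unit ball of X onto the closed unit ball of Y. Suppose u ∈ S_X and v ∈ B_X are such that u*(−v) = −u*(v), ‖F(u)‖ = ‖u‖, and F(a·v) = a·F(v) for all a ∈ [−1, 1]. Then (F(u))*(F(v)) = u*(v). -/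
/-!
For `|a| ≤ 1`, non-expansiveness at the pair `u, -a • v` together with `F (-a • v) = -a • F v`
gives `‖F u + a • F v‖ ≤ ‖u + a • v‖`; since `‖F u‖ = ‖u‖`, comparing difference quotients yields
`(F u)*(F v) ≤ u*(v)` and `(F u)*(-F v) ≤ u*(-v) = -u*(v)`. The norm being subadditive,
`-(F u)*(F v) ≤ (F u)*(-F v)`, which squeezes `(F u)*(F v)` to `u*(v)`.
-/

open Metric Set Filter Topology

/-- The one-sided directional derivative of the norm at `u` in direction `v`:
`u*(v) = lim_{a → 0⁺} (‖u + a • v‖ - ‖u‖) / a`. The limit exists by convexity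
of the norm, so `limUnder` picks out exactly this limit. -/
noncomputable def dirDeriv {X : Type*} [NormedAddCommGroup X] [NormedSpace ℝ X]
    (u v : X) : ℝ :=
  Filter.limUnder (nhdsWithin (0 : ℝ) (Set.Ioi 0))
    (fun a : ℝ => (‖u + a • v‖ - ‖u‖) / a)

section DirDeriv

variable {X : Type*} [NormedAddCommGroup X] [NormedSpace ℝ X]

theorem convexOn_norm_add_smul (u v : X) : ConvexOn ℝ univ fun a : ℝ => ‖u + a • v‖ := by
  refine (convexOn_univ_norm.comp_affineMap (AffineMap.lineMap (k := ℝ) u (u + v))).congr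
    fun a _ => ?_
  simp [AffineMap.lineMap_apply, add_comm]

theorem monotoneOn_norm_add_smul_slope (u v : X) :
    MonotoneOn (fun a : ℝ => (‖u + a • v‖ - ‖u‖) / a) (Ioi 0) := by
  intro a (ha : 0 < a) b (hb : 0 < b) hab
  simpa using (convexOn_norm_add_smul u v).secant_mono (a := 0) trivial trivial trivial
    ha.ne' hb.ne' hab

theorem neg_norm_le_norm_add_smul_slope (u v : X) {a : ℝ} (ha : 0 < a) :
    -‖v‖ ≤ (‖u + a • v‖ - ‖u‖) / a := by
  rw [le_div_iff₀ ha, neg_mul, neg_le, neg_sub]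
  calc ‖u‖ - ‖u + a • v‖ ≤ ‖a • v‖ := by simpa using norm_sub_norm_le u (u + a • v)
    _ = ‖v‖ * a := by rw [norm_smul, Real.norm_of_nonneg ha.le, mul_comm]

theorem tendsto_norm_add_smul_slope_dirDeriv (u v : X) :
    Tendsto (fun a : ℝ => (‖u + a • v‖ - ‖u‖) / a) (𝓝[>] 0) (𝓝 (dirDeriv u v)) := by
  have h := (monotoneOn_norm_add_smul_slope u v).tendsto_nhdsGT
    ⟨-‖v‖, by rintro _ ⟨a, ha, rfl⟩; exact neg_norm_le_norm_add_smul_slope u v ha⟩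
  rwa [← h.limUnder_eq] at h

theorem neg_dirDeriv_le_dirDeriv_neg (u v : X) : -dirDeriv u v ≤ dirDeriv u (-v) := by
  refine le_of_tendsto_of_tendsto (tendsto_norm_add_smul_slope_dirDeriv u v).neg
    (tendsto_norm_add_smul_slope_dirDeriv u (-v)) ?_
  filter_upwards [self_mem_nhdsWithin] with a (ha : 0 < a)
  rw [← neg_div]
  gcongr
  have := norm_add_le (u + a • v) (u + a • -v)
  rw [show u + a • v + (u + a • -v) = (2 : ℝ) • u by module, norm_smul, Real.norm_two] at this
  linarith

theorem dirDeriv_le_dirDeriv_of_norm_add_smul_le {Y : Type*} [NormedAddCommGroup Y]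
    [NormedSpace ℝ Y] {u v : X} {w z : Y} (hnorm : ‖w‖ = ‖u‖)
    (h : ∀ a ∈ Ioo (0 : ℝ) 1, ‖w + a • z‖ ≤ ‖u + a • v‖) :
    dirDeriv w z ≤ dirDeriv u v := by
  refine le_of_tendsto_of_tendsto (tendsto_norm_add_smul_slope_dirDeriv w z)
    (tendsto_norm_add_smul_slope_dirDeriv u v) ?_
  filter_upwards [Ioo_mem_nhdsGT zero_lt_one] with a ha
  rw [hnorm]
  gcongr
  · exact ha.1.le
  · exact h a ha

end DirDeriv

theorem nonexpansive_bijection_directional_derivative_eq_general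
    {X Y : Type*} [NormedAddCommGroup X] [NormedSpace ℝ X]
    [NormedAddCommGroup Y] [NormedSpace ℝ Y]
    (F : X → Y)
    (hne : ∀ x ∈ closedBall (0 : X) 1, ∀ y ∈ closedBall (0 : X) 1,
      ‖F x - F y‖ ≤ ‖x - y‖)
    (u : X) (hu : u ∈ sphere (0 : X) 1)
    (v : X) (hv : v ∈ closedBall (0 : X) 1)
    (hodd : dirDeriv u (-v) = -dirDeriv u v)
    (hnormFu : ‖F u‖ = ‖u‖)
    (hhom : ∀ a ∈ Set.Icc (-1 : ℝ) 1, F (a • v) = a • F v) :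
    dirDeriv (F u) (F v) = dirDeriv u v := by
  have hnorm_le : ∀ a ∈ Icc (-1 : ℝ) 1, ‖F u + a • F v‖ ≤ ‖u + a • v‖ := by
    intro a ha
    have ha' : -a ∈ Icc (-1 : ℝ) 1 := ⟨by linarith [ha.2], by linarith [ha.1]⟩
    have hav : -a • v ∈ closedBall (0 : X) 1 :=
      balanced_closedBall_zero.smul_mem (by rwa [norm_neg, Real.norm_eq_abs, abs_le]) hv
    have := hne u (sphere_subset_closedBall hu) _ hav
    rwa [hhom _ ha', neg_smul, neg_smul, sub_neg_eq_add, sub_neg_eq_add] at this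
  have hle : dirDeriv (F u) (F v) ≤ dirDeriv u v :=
    dirDeriv_le_dirDeriv_of_norm_add_smul_le hnormFu fun a ha =>
      hnorm_le a ⟨by linarith [ha.1], ha.2.le⟩
  have hle_neg : dirDeriv (F u) (-F v) ≤ dirDeriv u (-v) :=
    dirDeriv_le_dirDeriv_of_norm_add_smul_le hnormFu fun a ha => by
      simpa only [smul_neg, ← neg_smul] using hnorm_le (-a) ⟨by linarith [ha.2], by linarith [ha.1]⟩
  linarith [neg_dirDeriv_le_dirDeriv_neg (F u) (F v)]

theorem nonexpansive_bijection_directional_derivative_eq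
    {X Y : Type*} [NormedAddCommGroup X] [NormedSpace ℝ X] [CompleteSpace X]
    [NormedAddCommGroup Y] [NormedSpace ℝ Y] [CompleteSpace Y]
    (F : X → Y)
    (hbij : Set.BijOn F (closedBall (0 : X) 1) (closedBall (0 : Y) 1))
    (hne : ∀ x ∈ closedBall (0 : X) 1, ∀ y ∈ closedBall (0 : X) 1,
      ‖F x - F y‖ ≤ ‖x - y‖)
    (u : X) (hu : u ∈ sphere (0 : X) 1)
    (v : X) (hv : v ∈ closedBall (0 : X) 1)
    (hodd : dirDeriv u (-v) = -dirDeriv u v)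
    (hnormFu : ‖F u‖ = ‖u‖)
    (hhom : ∀ a ∈ Set.Icc (-1 : ℝ) 1, F (a • v) = a • F v) :
    dirDeriv (F u) (F v) = dirDeriv u v :=
  nonexpansive_bijection_directional_derivative_eq_general F hne u hu v hv hodd hnormFu hhom
end

section
/- Let X and Y be real Banach spaces and let F : B_X → B_Y be a non-expansive bijection with F(S_X) = S_Y. Let V ⊆ S_X be a set such that F(a·v) = a·F(v) for all a ∈ [−1, 1] and all v ∈ V, and set A = { t·x : x ∈ V, t ∈ [−1, 1] }. Then the restriction of F to A is a bijective isometry between A and F(A); that is, ‖F(y₁) − F(y₂)‖ = ‖y₁ − y₂‖ for all y₁, y₂ ∈ A. -/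
/-!
On the segment from `x` to `-y` the norm is a Lipschitz function `h` of the parameter, and
`‖x - y‖ = 2 h(1/2)`. For `z` on the segment just before its midpoint and a norming functional `f`
of `F z`, the bound `‖F z‖ ≥ ‖z‖` and non-expansiveness give `f (F p) ≥ ‖z‖ - ‖z - p‖` on the ball.
For suitable multiples `p` of `x` and of `-y`, the point `z - p` lies on the ray through a point of
the segment, so these lower bounds for `f (F x)` and `f (F (-y))` are values of secant lines of `h`
at the endpoints. Their sum falls short of `2 h(1/2)` only by the gap between two adjacent secant
slopes, which is small once the slope towards `1/2` is close to its supremum.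
-/

open Metric Set Filter Topology

open scoped NNReal

theorem exists_slope_le_slope_add {h : ℝ → ℝ} {K : ℝ≥0} (hh : LipschitzWith K h) {a c : ℝ}
    (hac : a < c) {ε : ℝ} (hε : 0 < ε) :
    ∃ r s, a ≤ r ∧ r < s ∧ s < c ∧ slope h s c ≤ slope h r s + ε := by
  set S := (fun t => slope h t c) '' Ico a c
  have hS : BddAbove S := by
    refine ⟨K, ?_⟩
    rintro _ ⟨t, ht, rfl⟩
    have htc : 0 < c - t := sub_pos.2 ht.2
    show slope h t c ≤ K
    rw [slope_def_field, div_le_iff₀ htc]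
    calc h c - h t ≤ |h c - h t| := le_abs_self _
      _ ≤ K * |c - t| := by simpa [Real.dist_eq] using hh.dist_le_mul c t
      _ = K * (c - t) := by rw [abs_of_pos htc]
  obtain ⟨_, ⟨r, hr, rfl⟩, hlt⟩ :=
    exists_lt_of_lt_csSup (⟨_, mem_image_of_mem _ ⟨le_rfl, hac⟩⟩ : S.Nonempty)
      (sub_lt_self (sSup S) hε)
  replace hlt : sSup S - ε < (h c - h r) / (c - r) := by rwa [← slope_def_field]
  have hcont : ContinuousAt (fun s => (h s - h r) / (s - r)) c :=
    (hh.continuous.continuousAt.sub continuousAt_const).div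
      (continuousAt_id.sub continuousAt_const) (sub_ne_zero.2 hr.2.ne')
  obtain ⟨s, ⟨hrs, hsc⟩, hs⟩ := (Eventually.and (Ioo_mem_nhdsLT hr.2)
    ((hcont.tendsto.mono_left nhdsWithin_le_nhds).eventually (lt_mem_nhds hlt))).exists
  have hsS := le_csSup hS (mem_image_of_mem (fun t => slope h t c) ⟨hr.1.trans hrs.le, hsc⟩)
  rw [← slope_def_field] at hs
  exact ⟨r, s, hr.1, hrs, hsc, by linarith⟩

theorem lipschitzWith_norm_add_smul {E : Type*} [SeminormedAddCommGroup E] [NormedSpace ℝ E]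
    (x d : E) : LipschitzWith ‖d‖₊ fun t : ℝ => ‖x + t • d‖ :=
  LipschitzWith.of_dist_le_mul fun t u =>
    calc |‖x + t • d‖ - ‖x + u • d‖| ≤ ‖(x + t • d) - (x + u • d)‖ := abs_norm_sub_norm_le _ _
      _ = ‖d‖ * dist t u := by
        rw [add_sub_add_left_eq_sub, ← sub_smul, norm_smul, Real.dist_eq, Real.norm_eq_abs,
          mul_comm]

section

variable {X Y : Type*} [NormedAddCommGroup X] [NormedAddCommGroup Y] {F : X → Y}

theorem sub_norm_sub_le_apply_of_norming [NormedSpace ℝ Y]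
    (hF : LipschitzOnWith 1 F (closedBall 0 1)) {z p : X} (hz : z ∈ closedBall 0 1)
    (hp : p ∈ closedBall 0 1) (hFz : ‖z‖ ≤ ‖F z‖)
    {f : StrongDual ℝ Y} (hf : ‖f‖ ≤ 1) (hfz : f (F z) = ‖F z‖) :
    ‖z‖ - ‖z - p‖ ≤ f (F p) := by
  have h1 : f (F z - F p) ≤ ‖z - p‖ :=
    calc f (F z - F p) ≤ ‖f (F z - F p)‖ := le_abs_self _
      _ ≤ 1 * ‖F z - F p‖ := f.le_of_opNorm_le hf _
      _ ≤ ‖z - p‖ := by simpa using hF.norm_sub_le hz hp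
  rw [map_sub] at h1
  linarith

theorem norm_le_norm_apply_of_mapsTo_sphere [NormedSpace ℝ X]
    (hF : LipschitzOnWith 1 F (closedBall 0 1)) (hS : MapsTo F (sphere 0 1) (sphere 0 1))
    {z : X} (hz : z ∈ closedBall 0 1) :
    ‖z‖ ≤ ‖F z‖ := by
  rcases eq_or_ne z 0 with rfl | hz0
  · simp
  have hz1 : ‖z‖ ≤ 1 := mem_closedBall_zero_iff.1 hz
  have hnz : 0 < ‖z‖ := norm_pos_iff.2 hz0
  set u := ‖z‖⁻¹ • z
  have hu : u ∈ sphere (0 : X) 1 := by simp [u, norm_smul, hnz.ne']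
  have hzu : ‖u - z‖ = 1 - ‖z‖ := by
    rw [show u - z = (‖z‖⁻¹ - 1) • z by rw [sub_smul, one_smul], norm_smul,
      Real.norm_of_nonneg (sub_nonneg.2 ((one_le_inv₀ hnz).2 hz1)), sub_mul,
      inv_mul_cancel₀ hnz.ne', one_mul]
  calc ‖z‖ = ‖F u‖ - ‖u - z‖ := by rw [mem_sphere_zero_iff_norm.1 (hS hu), hzu]; ring
    _ ≤ ‖F u‖ - ‖F u - F z‖ := by
      gcongr; simpa using hF.norm_sub_le (sphere_subset_closedBall hu) hz
    _ ≤ ‖F z‖ := by linarith [norm_sub_norm_le (F u) (F z)]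

variable [NormedSpace ℝ X] [NormedSpace ℝ Y]

theorem norm_add_le_norm_apply_add_add_slope_sub_slope
    (hF : LipschitzOnWith 1 F (closedBall 0 1))
    (hnorm : ∀ z ∈ closedBall (0 : X) 1, ‖z‖ ≤ ‖F z‖) {x q : X}
    (hx : x ∈ closedBall 0 1) (hq : q ∈ closedBall 0 1)
    (hFx : ∀ a ∈ Icc (0 : ℝ) 1, F (a • x) = a • F x)
    (hFq : ∀ a ∈ Icc (0 : ℝ) 1, F (a • q) = a • F q) {r s : ℝ} (hr : 0 ≤ r) (hrs : r < s)
    (hs : s < 1 / 2) :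
    let h : ℝ → ℝ := fun t => ‖x + t • (q - x)‖
    ‖x + q‖ ≤ ‖F x + F q‖ + (1 - s) * (slope h s (1 / 2) - slope h r s) := by
  intro h
  have hslope : ∀ a b, (b - a) * slope h a b = h b - h a := fun a b => by
    simpa using sub_smul_slope h a b
  have hball := convex_closedBall (0 : X) 1
  set z := x + s • (q - x)
  have hz : z ∈ closedBall 0 1 := hball.add_smul_sub_mem hx hq ⟨hr.trans hrs.le, by linarith⟩
  obtain ⟨f, hf, hfz⟩ := exists_dual_vector'' ℝ (F z)
  have hest : ∀ a ∈ Icc (0 : ℝ) 1, ∀ p ∈ closedBall (0 : X) 1, F (a • p) = a • F p →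
      ‖z‖ - ‖z - a • p‖ ≤ a * f (F p) := fun a ha p hp hFp => by
    simpa [hFp] using sub_norm_sub_le_apply_of_norming hF hz
      (hball.smul_mem_of_zero_mem (mem_closedBall_self zero_le_one) hp ha) (hnorm z hz) hf hfz
  -- the multiples of `x` and `q` are chosen so that `z - p` lies on the ray through the point
  -- with parameter `1 / 2`, resp. `r`
  have hFx' : h s - s * slope h s (1 / 2) ≤ f (F x) := by
    have ha : 1 - 2 * s ∈ Icc (0 : ℝ) 1 := ⟨by linarith, by linarith⟩
    have := hest _ ha x hx (hFx _ ha)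
    rw [show z - (1 - 2 * s) • x = (2 * s) • (x + (1 / 2 : ℝ) • (q - x)) by module, norm_smul,
      Real.norm_of_nonneg (by linarith)] at this
    refine le_of_mul_le_mul_left ?_ (by linarith : 0 < 1 - 2 * s)
    linear_combination this - 2 * s * hslope s (1 / 2)
  have hFq' : h s + (1 - s) * slope h r s ≤ f (F q) := by
    have hr1 : 0 < 1 - r := by linarith
    obtain ⟨κ, hκ0, hκ⟩ : ∃ κ, 0 ≤ κ ∧ κ * (1 - r) = 1 - s :=
      ⟨(1 - s) / (1 - r), div_nonneg (by linarith) hr1.le, div_mul_cancel₀ _ hr1.ne'⟩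
    have hb : 1 - κ ∈ Icc (0 : ℝ) 1 := ⟨by nlinarith, by linarith⟩
    have := hest _ hb q hq (hFq _ hb)
    rw [show z - (1 - κ) • q = κ • (x + r • (q - x)) by
        linear_combination (norm := module) (-hκ) • (x - q),
      norm_smul, Real.norm_of_nonneg hκ0] at this
    refine le_of_mul_le_mul_left ?_ (by linarith : 0 < s - r)
    linear_combination mul_le_mul_of_nonneg_left this hr1.le + (1 - s) * hslope r s
      + (h r - f (F q)) * hκ
  have hFxq : f (F x) + f (F q) ≤ ‖F x + F q‖ := by
    rw [← map_add]
    exact (le_abs_self _).trans ((f.le_of_opNorm_le hf _).trans_eq (one_mul _))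
  have hmid : ‖x + q‖ = 2 * h (1 / 2) := by
    show ‖x + q‖ = 2 * ‖x + (1 / 2 : ℝ) • (q - x)‖
    rw [show x + (1 / 2 : ℝ) • (q - x) = (1 / 2 : ℝ) • (x + q) by module, norm_smul,
      Real.norm_of_nonneg (by norm_num)]
    ring
  linarith [hslope s (1 / 2)]

theorem norm_add_le_norm_apply_add (hF : LipschitzOnWith 1 F (closedBall 0 1))
    (hnorm : ∀ z ∈ closedBall (0 : X) 1, ‖z‖ ≤ ‖F z‖) {x q : X}
    (hx : x ∈ closedBall 0 1) (hq : q ∈ closedBall 0 1)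
    (hFx : ∀ a ∈ Icc (0 : ℝ) 1, F (a • x) = a • F x)
    (hFq : ∀ a ∈ Icc (0 : ℝ) 1, F (a • q) = a • F q) :
    ‖x + q‖ ≤ ‖F x + F q‖ := by
  refine le_of_forall_pos_le_add fun ε hε => ?_
  obtain ⟨r, s, hr, hrs, hs, hsr⟩ :=
    exists_slope_le_slope_add (lipschitzWith_norm_add_smul x (q - x)) (one_half_pos (α := ℝ)) hε
  have hgap := norm_add_le_norm_apply_add_add_slope_sub_slope hF hnorm hx hq hFx hFq hr hrs hs
  have := mul_le_mul_of_nonneg_left (sub_le_iff_le_add'.2 hsr) (by linarith : 0 ≤ 1 - s)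
  linarith [mul_nonneg (hr.trans hrs.le) hε.le]

theorem norm_sub_le_norm_apply_sub (hF : LipschitzOnWith 1 F (closedBall 0 1))
    (hnorm : ∀ z ∈ closedBall (0 : X) 1, ‖z‖ ≤ ‖F z‖) {x y : X}
    (hx : x ∈ closedBall 0 1) (hy : y ∈ closedBall 0 1)
    (hFx : ∀ a ∈ Icc (-1 : ℝ) 1, F (a • x) = a • F x)
    (hFy : ∀ a ∈ Icc (-1 : ℝ) 1, F (a • y) = a • F y) :
    ‖x - y‖ ≤ ‖F x - F y‖ := by
  have hIcc : Icc (0 : ℝ) 1 ⊆ Icc (-1) 1 := Icc_subset_Icc (by norm_num) le_rfl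
  have hFny : F (-y) = -F y := by simpa using hFy (-1) ⟨le_rfl, by norm_num⟩
  have hFny' : ∀ a ∈ Icc (0 : ℝ) 1, F (a • -y) = a • F (-y) := fun a ha => by
    rw [smul_neg, ← neg_smul, hFy _ ⟨by linarith [ha.2], by linarith [ha.1]⟩, hFny, neg_smul,
      smul_neg]
  simpa [sub_eq_add_neg, hFny] using norm_add_le_norm_apply_add hF hnorm hx
    (by simpa using hy) (fun a ha => hFx a (hIcc ha)) hFny'

end

theorem nonexpansive_bijection_isometry_on_symmetric_cone_general
    {X Y : Type*} [NormedAddCommGroup X] [NormedSpace ℝ X]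
    [NormedAddCommGroup Y] [NormedSpace ℝ Y]
    (F : X → Y)
    (hne : ∀ x ∈ closedBall (0 : X) 1, ∀ y ∈ closedBall (0 : X) 1,
      ‖F x - F y‖ ≤ ‖x - y‖)
    (hsph : F '' sphere (0 : X) 1 = sphere (0 : Y) 1)
    (V : Set X) (hV : V ⊆ sphere (0 : X) 1)
    (hhom : ∀ v ∈ V, ∀ a ∈ Set.Icc (-1 : ℝ) 1, F (a • v) = a • F v)
    (A : Set X) (hA : A = {y : X | ∃ x ∈ V, ∃ t ∈ Set.Icc (-1 : ℝ) 1, y = t • x}) :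
    ∀ y₁ ∈ A, ∀ y₂ ∈ A, ‖F y₁ - F y₂‖ = ‖y₁ - y₂‖ := by
  have hF : LipschitzOnWith 1 F (closedBall 0 1) :=
    LipschitzOnWith.mk_one fun x hx y hy => by simpa [dist_eq_norm] using hne x hx y hy
  have hnorm : ∀ z ∈ closedBall (0 : X) 1, ‖z‖ ≤ ‖F z‖ := fun z =>
    norm_le_norm_apply_of_mapsTo_sphere hF (hsph ▸ mapsTo_image F _)
  have hball : A ⊆ closedBall 0 1 := by
    rw [hA]
    rintro _ ⟨v, hv, t, ht, rfl⟩
    rw [mem_closedBall_zero_iff, norm_smul, mem_sphere_zero_iff_norm.1 (hV hv), mul_one]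
    exact abs_le.2 ht
  have hsmul : ∀ y ∈ A, ∀ a ∈ Icc (-1 : ℝ) 1, F (a • y) = a • F y := by
    rw [hA]
    rintro _ ⟨v, hv, t, ht, rfl⟩ a ha
    have hat : a * t ∈ Icc (-1 : ℝ) 1 := by
      rw [mem_Icc, ← abs_le, abs_mul] at *
      exact mul_le_one₀ ha (abs_nonneg _) ht
    rw [smul_smul, hhom v hv _ hat, hhom v hv t ht, smul_smul]
  intro y₁ hy₁ y₂ hy₂
  exact le_antisymm (hne _ (hball hy₁) _ (hball hy₂))
    (norm_sub_le_norm_apply_sub hF hnorm (hball hy₁) (hball hy₂) (hsmul _ hy₁) (hsmul _ hy₂))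

theorem nonexpansive_bijection_isometry_on_symmetric_cone
    {X Y : Type*} [NormedAddCommGroup X] [NormedSpace ℝ X] [CompleteSpace X]
    [NormedAddCommGroup Y] [NormedSpace ℝ Y] [CompleteSpace Y]
    (F : X → Y)
    (hbij : Set.BijOn F (closedBall (0 : X) 1) (closedBall (0 : Y) 1))
    (hne : ∀ x ∈ closedBall (0 : X) 1, ∀ y ∈ closedBall (0 : X) 1,
      ‖F x - F y‖ ≤ ‖x - y‖)
    (hsph : F '' sphere (0 : X) 1 = sphere (0 : Y) 1)
    (V : Set X) (hV : V ⊆ sphere (0 : X) 1)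
    (hhom : ∀ v ∈ V, ∀ a ∈ Set.Icc (-1 : ℝ) 1, F (a • v) = a • F v)
    (A : Set X) (hA : A = {y : X | ∃ x ∈ V, ∃ t ∈ Set.Icc (-1 : ℝ) 1, y = t • x}) :
    ∀ y₁ ∈ A, ∀ y₂ ∈ A, ‖F y₁ - F y₂‖ = ‖y₁ - y₂‖ :=
  nonexpansive_bijection_isometry_on_symmetric_cone_general F hne hsph V hV hhom A hA
end

section
/- Let X and Y be real Banach spaces and let F : B_X → B_Y be a non-expansive bijection from the closed unit ball of X onto the closed unit ball of Y satisfying: (i) F maps S_X bijectively onto S_Y; (ii) F(a·x) = a·F(x) for all x ∈ S_X and a ∈ (0, 1); (iii) F(−x) = −F(x) for all x ∈ S_X. Then F is an isometry: ‖F(x) − F(y)‖ = ‖x − y‖ for all x, y ∈ B_X. -/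
/-!
Positive homogeneity and oddness on the sphere, together with `F 0 = 0`, let one shrink any pair
`p ∈ B_X`, `β • w` (`w ∈ S_X`, `β ∈ ℝ`) into the ball by the factor `(1 + |β|)⁻¹`, so
non-expansiveness gives `‖F p - β • F w‖ ≤ ‖p - β • w‖`. Writing an arbitrary `z` as `‖z‖` times a
unit vector and applying this at `x` and at `y` gives `2‖z‖ ≤ ‖z - x‖ + ‖F x - F y‖ + ‖z + y‖`.
For `z = x + (2t + 1) • (x - y)` this says `‖x - y‖ ≤ ‖F x - F y‖ + 2 (g t - g (2t + 1))`, where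
`g t = ‖x + t • (x - y)‖ - t ‖x - y‖` is antitone and bounded below, hence convergent.
-/

open Metric Set Filter Topology

section

variable {E : Type*} [SeminormedAddCommGroup E] [NormedSpace ℝ E]

theorem antitone_norm_add_smul_sub_mul_norm (x v : E) :
    Antitone fun t : ℝ => ‖x + t • v‖ - t * ‖v‖ := by
  intro s t hst
  have : ‖x + t • v‖ ≤ ‖x + s • v‖ + (t - s) * ‖v‖ :=
    calc ‖x + t • v‖ = ‖(x + s • v) + (t - s) • v‖ := by rw [sub_smul]; abel_nf
      _ ≤ ‖x + s • v‖ + ‖(t - s) • v‖ := norm_add_le _ _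
      _ = ‖x + s • v‖ + (t - s) * ‖v‖ := by
        rw [norm_smul, Real.norm_of_nonneg (sub_nonneg.2 hst)]
  dsimp only
  linarith

theorem neg_norm_le_norm_add_smul_sub_mul_norm (x v : E) (t : ℝ) :
    -‖x‖ ≤ ‖x + t • v‖ - t * ‖v‖ := by
  have h₁ : ‖t • v‖ ≤ ‖x + t • v‖ + ‖x‖ := by
    simpa using norm_sub_le (x + t • v) x
  have h₂ : t * ‖v‖ ≤ ‖t • v‖ := by
    rw [norm_smul, Real.norm_eq_abs]
    exact mul_le_mul_of_nonneg_right (le_abs_self t) (norm_nonneg v)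
  linarith

theorem norm_sub_le_of_forall_two_mul_norm_le {x y : E} {c : ℝ}
    (h : ∀ z : E, 2 * ‖z‖ ≤ ‖z - x‖ + c + ‖z + y‖) : ‖x - y‖ ≤ c := by
  set v := x - y
  set g : ℝ → ℝ := fun t => ‖x + t • v‖ - t * ‖v‖
  have hlim : Tendsto g atTop (𝓝 (⨅ t, g t)) :=
    tendsto_atTop_ciInf (antitone_norm_add_smul_sub_mul_norm x v)
      ⟨-‖x‖, by rintro _ ⟨t, rfl⟩; exact neg_norm_le_norm_add_smul_sub_mul_norm x v t⟩
  have hstep : ∀ t ≥ (0 : ℝ), ‖v‖ ≤ c + 2 * (g t - g (2 * t + 1)) := by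
    intro t ht
    have hz := h (x + (2 * t + 1) • v)
    have hzx : ‖x + (2 * t + 1) • v - x‖ = (2 * t + 1) * ‖v‖ := by
      rw [add_sub_cancel_left, norm_smul, Real.norm_of_nonneg (by positivity)]
    have hzy : x + (2 * t + 1) • v + y = (2 : ℝ) • (x + t • v) := by
      simp only [v]; module
    rw [hzx, hzy, norm_smul, Real.norm_two] at hz
    simp only [g]
    linarith
  have hdouble : Tendsto (fun t : ℝ => 2 * t + 1) atTop atTop :=
    tendsto_atTop_add_const_right _ _ (tendsto_id.const_mul_atTop two_pos)
  have hdiff : Tendsto (fun t => g t - g (2 * t + 1)) atTop (𝓝 0) := by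
    simpa using hlim.sub (hlim.comp hdouble)
  have hbound : Tendsto (fun t => c + 2 * (g t - g (2 * t + 1))) atTop (𝓝 c) := by
    simpa using (hdiff.const_mul 2).const_add c
  exact ge_of_tendsto hbound ((eventually_ge_atTop 0).mono hstep)

end

section

variable {X Y : Type*} [NormedAddCommGroup X] [NormedSpace ℝ X]
  [NormedAddCommGroup Y] [NormedSpace ℝ Y] {F : X → Y}

theorem map_zero_eq_zero_of_nonexpansive [Nontrivial X]
    (hne : ∀ x ∈ closedBall (0 : X) 1, ∀ y ∈ closedBall (0 : X) 1, ‖F x - F y‖ ≤ ‖x - y‖)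
    (hmaps : MapsTo F (sphere (0 : X) 1) (sphere (0 : Y) 1))
    (hhom : ∀ x ∈ sphere (0 : X) 1, ∀ a ∈ Ioo (0 : ℝ) 1, F (a • x) = a • F x) :
    F 0 = 0 := by
  obtain ⟨u, hu⟩ := exists_norm_eq X zero_le_one
  have hu_mem : u ∈ sphere (0 : X) 1 := mem_sphere_zero_iff_norm.2 hu
  have hFu : ‖F u‖ = 1 := mem_sphere_zero_iff_norm.1 (hmaps hu_mem)
  have hbound : ∀ a ∈ Ioo (0 : ℝ) 1, ‖F 0‖ ≤ 2 * a := by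
    rintro a ⟨ha₀, ha₁⟩
    have hau : ‖a • u‖ = a := by rw [norm_smul, hu, mul_one, Real.norm_of_nonneg ha₀.le]
    have hne_au : ‖F 0 - F (a • u)‖ ≤ a := by
      simpa [hau] using hne 0 (mem_closedBall_self zero_le_one) (a • u)
        (mem_closedBall_zero_iff.2 (hau.trans_le ha₁.le))
    have hF_au : ‖F (a • u)‖ = a := by
      rw [hhom u hu_mem a ⟨ha₀, ha₁⟩, norm_smul, hFu, mul_one, Real.norm_of_nonneg ha₀.le]
    calc ‖F 0‖ ≤ ‖F 0 - F (a • u)‖ + ‖F (a • u)‖ := norm_le_norm_sub_add _ _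
      _ ≤ 2 * a := by linarith
  have hlim : Tendsto (fun a : ℝ => 2 * a) (𝓝[>] 0) (𝓝 0) := by
    simpa using ((tendsto_id (x := 𝓝 (0 : ℝ))).const_mul 2).mono_left nhdsWithin_le_nhds
  exact norm_le_zero_iff.1
    (ge_of_tendsto hlim (Filter.mem_of_superset (Ioo_mem_nhdsGT zero_lt_one) hbound))

theorem map_smul_of_mem_sphere_of_mem_Icc (hF0 : F 0 = 0)
    (hhom : ∀ x ∈ sphere (0 : X) 1, ∀ a ∈ Ioo (0 : ℝ) 1, F (a • x) = a • F x)
    {w : X} (hw : w ∈ sphere (0 : X) 1) {a : ℝ} (ha : a ∈ Icc (0 : ℝ) 1) :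
    F (a • w) = a • F w := by
  rcases ha.1.eq_or_lt with rfl | ha₀
  · simp [hF0]
  rcases ha.2.eq_or_lt with rfl | ha₁
  · simp
  exact hhom w hw a ⟨ha₀, ha₁⟩

theorem map_smul_of_mem_sphere_of_abs_le_one (hF0 : F 0 = 0)
    (hhom : ∀ x ∈ sphere (0 : X) 1, ∀ a ∈ Ioo (0 : ℝ) 1, F (a • x) = a • F x)
    (hodd : ∀ x ∈ sphere (0 : X) 1, F (-x) = -F x)
    {w : X} (hw : w ∈ sphere (0 : X) 1) {a : ℝ} (ha : |a| ≤ 1) :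
    F (a • w) = a • F w := by
  rcases le_or_gt 0 a with ha₀ | ha₀
  · exact map_smul_of_mem_sphere_of_mem_Icc hF0 hhom hw ⟨ha₀, (le_abs_self a).trans ha⟩
  · have hnw : -w ∈ sphere (0 : X) 1 := by simpa using hw
    have := map_smul_of_mem_sphere_of_mem_Icc hF0 hhom hnw
      ⟨neg_nonneg.2 ha₀.le, (neg_le_abs a).trans ha⟩
    rwa [neg_smul_neg, hodd w hw, neg_smul_neg] at this

theorem map_smul_of_mem_closedBall_of_mem_Icc (hF0 : F 0 = 0)
    (hhom : ∀ x ∈ sphere (0 : X) 1, ∀ a ∈ Ioo (0 : ℝ) 1, F (a • x) = a • F x)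
    {p : X} (hp : p ∈ closedBall (0 : X) 1) {a : ℝ} (ha : a ∈ Icc (0 : ℝ) 1) :
    F (a • p) = a • F p := by
  rcases eq_or_ne p 0 with rfl | hp₀
  · simp [hF0]
  set u := ‖p‖⁻¹ • p
  have hu : u ∈ sphere (0 : X) 1 := mem_sphere_zero_iff_norm.2 (norm_smul_inv_norm hp₀)
  have hpu : p = ‖p‖ • u := by simp [u, smul_smul, norm_ne_zero_iff.2 hp₀]
  have hp₁ : ‖p‖ ≤ 1 := mem_closedBall_zero_iff.1 hp
  have hap : a * ‖p‖ ∈ Icc (0 : ℝ) 1 :=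
    ⟨mul_nonneg ha.1 (norm_nonneg p), mul_le_one₀ ha.2 (norm_nonneg p) hp₁⟩
  rw [hpu, smul_smul, map_smul_of_mem_sphere_of_mem_Icc hF0 hhom hu hap,
    map_smul_of_mem_sphere_of_mem_Icc hF0 hhom hu ⟨norm_nonneg p, hp₁⟩, smul_smul]

theorem norm_map_sub_smul_le (hF0 : F 0 = 0)
    (hne : ∀ x ∈ closedBall (0 : X) 1, ∀ y ∈ closedBall (0 : X) 1, ‖F x - F y‖ ≤ ‖x - y‖)
    (hhom : ∀ x ∈ sphere (0 : X) 1, ∀ a ∈ Ioo (0 : ℝ) 1, F (a • x) = a • F x)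
    (hodd : ∀ x ∈ sphere (0 : X) 1, F (-x) = -F x)
    {p : X} (hp : p ∈ closedBall (0 : X) 1) {w : X} (hw : w ∈ sphere (0 : X) 1) (β : ℝ) :
    ‖F p - β • F w‖ ≤ ‖p - β • w‖ := by
  set l := (1 + |β|)⁻¹
  have hl₀ : 0 < l := by positivity
  have hlβ : |l * β| ≤ 1 := by
    rw [abs_mul, abs_of_pos hl₀, inv_mul_le_one₀ (by positivity)]
    linarith
  have hl₁ : l ≤ 1 := inv_le_one_of_one_le₀ (le_add_of_nonneg_right (abs_nonneg β))
  have hlp : l • p ∈ closedBall (0 : X) 1 :=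
    balanced_closedBall_zero.smul_mem (by rwa [Real.norm_of_nonneg hl₀.le]) hp
  have hlβw : (l * β) • w ∈ closedBall (0 : X) 1 :=
    balanced_closedBall_zero.smul_mem (by rwa [Real.norm_eq_abs]) (sphere_subset_closedBall hw)
  have h := hne _ hlp _ hlβw
  rw [map_smul_of_mem_closedBall_of_mem_Icc hF0 hhom hp ⟨hl₀.le, hl₁⟩,
    map_smul_of_mem_sphere_of_abs_le_one hF0 hhom hodd hw hlβ, ← smul_smul, ← smul_smul,
    ← smul_sub, ← smul_sub, norm_smul, norm_smul] at h
  exact le_of_mul_le_mul_left h (norm_pos_iff.2 hl₀.ne')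

theorem two_mul_norm_le_add_norm_map_sub (hF0 : F 0 = 0)
    (hne : ∀ x ∈ closedBall (0 : X) 1, ∀ y ∈ closedBall (0 : X) 1, ‖F x - F y‖ ≤ ‖x - y‖)
    (hmaps : MapsTo F (sphere (0 : X) 1) (sphere (0 : Y) 1))
    (hhom : ∀ x ∈ sphere (0 : X) 1, ∀ a ∈ Ioo (0 : ℝ) 1, F (a • x) = a • F x)
    (hodd : ∀ x ∈ sphere (0 : X) 1, F (-x) = -F x)
    {x y : X} (hx : x ∈ closedBall (0 : X) 1) (hy : y ∈ closedBall (0 : X) 1) (z : X) :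
    2 * ‖z‖ ≤ ‖z - x‖ + ‖F x - F y‖ + ‖z + y‖ := by
  rcases eq_or_ne z 0 with rfl | hz
  · simp only [norm_zero, mul_zero]
    positivity
  set u := ‖z‖⁻¹ • z
  have hu : u ∈ sphere (0 : X) 1 := mem_sphere_zero_iff_norm.2 (norm_smul_inv_norm hz)
  have hzu : ‖z‖ • u = z := by simp [u, smul_smul, norm_ne_zero_iff.2 hz]
  have hFu : ‖F u‖ = 1 := mem_sphere_zero_iff_norm.1 (hmaps hu)
  have hx' := norm_map_sub_smul_le hF0 hne hhom hodd hx hu ‖z‖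
  have hy' := norm_map_sub_smul_le hF0 hne hhom hodd hy hu (-‖z‖)
  rw [hzu, norm_sub_rev, norm_sub_rev x] at hx'
  rw [neg_smul, sub_neg_eq_add, neg_smul, sub_neg_eq_add, hzu, add_comm y] at hy'
  calc 2 * ‖z‖ = ‖(2 * ‖z‖) • F u‖ := by
        rw [norm_smul, hFu, mul_one, Real.norm_of_nonneg (by positivity)]
    _ = ‖(‖z‖ • F u - F x) + (F x - F y) + (F y + ‖z‖ • F u)‖ := by congr 1; module
    _ ≤ ‖‖z‖ • F u - F x‖ + ‖F x - F y‖ + ‖F y + ‖z‖ • F u‖ := norm_add₃_le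
    _ ≤ ‖z - x‖ + ‖F x - F y‖ + ‖z + y‖ := by gcongr

end

theorem nonexpansive_bijection_with_homogeneity_is_isometry_general
    {X Y : Type*} [NormedAddCommGroup X] [NormedSpace ℝ X]
    [NormedAddCommGroup Y] [NormedSpace ℝ Y]
    (F : X → Y)
    (hne : ∀ x ∈ closedBall (0 : X) 1, ∀ y ∈ closedBall (0 : X) 1,
      ‖F x - F y‖ ≤ ‖x - y‖)
    (hsph : Set.BijOn F (sphere (0 : X) 1) (sphere (0 : Y) 1))
    (hhom : ∀ x ∈ sphere (0 : X) 1, ∀ a ∈ Set.Ioo (0 : ℝ) 1, F (a • x) = a • F x)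
    (hodd : ∀ x ∈ sphere (0 : X) 1, F (-x) = -F x) :
    ∀ x ∈ closedBall (0 : X) 1, ∀ y ∈ closedBall (0 : X) 1,
      ‖F x - F y‖ = ‖x - y‖ := by
  intro x hx y hy
  rcases eq_or_ne x y with rfl | hxy
  · simp
  have : Nontrivial X := nontrivial_of_ne x y hxy
  have hF0 : F 0 = 0 := map_zero_eq_zero_of_nonexpansive hne hsph.mapsTo hhom
  refine le_antisymm (hne x hx y hy) (norm_sub_le_of_forall_two_mul_norm_le fun z => ?_)
  exact two_mul_norm_le_add_norm_map_sub hF0 hne hsph.mapsTo hhom hodd hx hy z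

theorem nonexpansive_bijection_with_homogeneity_is_isometry
    {X Y : Type*} [NormedAddCommGroup X] [NormedSpace ℝ X] [CompleteSpace X]
    [NormedAddCommGroup Y] [NormedSpace ℝ Y] [CompleteSpace Y]
    (F : X → Y)
    (hbij : Set.BijOn F (closedBall (0 : X) 1) (closedBall (0 : Y) 1))
    (hne : ∀ x ∈ closedBall (0 : X) 1, ∀ y ∈ closedBall (0 : X) 1,
      ‖F x - F y‖ ≤ ‖x - y‖)
    (hsph : Set.BijOn F (sphere (0 : X) 1) (sphere (0 : Y) 1))
    (hhom : ∀ x ∈ sphere (0 : X) 1, ∀ a ∈ Set.Ioo (0 : ℝ) 1, F (a • x) = a • F x)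
    (hodd : ∀ x ∈ sphere (0 : X) 1, F (-x) = -F x) :
    ∀ x ∈ closedBall (0 : X) 1, ∀ y ∈ closedBall (0 : X) 1,
      ‖F x - F y‖ = ‖x - y‖ :=
  nonexpansive_bijection_with_homogeneity_is_isometry_general F hne hsph hhom hodd
end

section
/- Let X be a real Banach space, F : B_X → B_{ℓ₁} a non-expansive bijection from the closed unit ball of X onto the closed unit ball of ℓ₁, and for each n let gₙ = F⁻¹(eₙ), where eₙ is the n-th canonical basis vector of ℓ₁. Then for every N ∈ ℕ and every collection of reals a₁, …, a_N with ‖Σ_{n≤N} aₙ·gₙ‖ ≤ 1, one has F(Σ_{n≤N} aₙ·gₙ) = Σ_{n≤N} aₙ·eₙ. -/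
/-!
`F 0 = 0`, so `F` does not increase norms. In `ℓ¹`, a point within `t` of `0` and within `1 - t`
of `s eₙ` (`|s| = 1`) must be `t s eₙ`; hence `F (t • b) = t s eₙ` whenever `F b = s eₙ`, first for
`0 ≤ t ≤ 1` and then, through the midpoint of `b` and `F⁻¹ (-s eₙ)`, for `|t| ≤ 1`.

For two such points `b₁ ↦ s₁ eₙ`, `b₂ ↦ s₂ eₘ`, the same `ℓ¹` geometry shows that
`F (α b₁ + γ b₂) = (α - ε) s₁ eₙ + (γ - ε) s₂ eₘ` with a defect `ε ≥ 0`, so `ε = 0` as soon as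
`‖F (α b₁ + γ b₂)‖ ≥ α + γ`. Suppose `μ`, the minimum of `‖F‖` on the hypotenuse
`t b₁ + (1 - t) b₂`, is `< 1`, attained at `θ`. Let `v` be the preimage of the hypotenuse point
`θ s₁ eₙ + (1 - θ) s₂ eₘ`. Then `F (μ v) = c₁ s₁ eₙ + c₂ s₂ eₘ` with `c₁ + c₂ = μ`, and since
`‖F‖ ≥ μ` on the hypotenuse, the intermediate value theorem finds a point of the triangle with
the same image. By injectivity `v` lies in the triangle, which forces `v = θ b₁ + (1 - θ) b₂` and `μ = 1`.

For three or more generators we argue by induction: if `w = F (∑ aᵢ gᵢ) - ∑ aᵢ eᵢ`, then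
dropping the `j`-th term shows `‖w + aⱼ eⱼ‖ ≤ |aⱼ|`, i.e. `‖w‖ ≤ 2 |wⱼ|`, for three indices `j`,
so `w = 0`. Rescaling then gives `‖∑ aᵢ gᵢ‖ = ∑ |aᵢ|`, which turns the hypothesis on
`‖∑ aᵢ gᵢ‖` into the `ℓ¹` bound the induction needs.
-/

open Metric Set Finset

local notation "ℓ¹(" ι ")" => lp (fun _ : ι => ℝ) 1

namespace Plasticity

theorem mul_self_eq_one_of_abs_eq_one {s : ℝ} (hs : |s| = 1) : s * s = 1 := by
  rw [← abs_mul_abs_self, hs, one_mul]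

theorem abs_mul_of_abs_eq_one {s : ℝ} (hs : |s| = 1) (x : ℝ) : |s * x| = |x| := by
  rw [abs_mul, hs, one_mul]

theorem mul_mul_self_of_abs_eq_one {s : ℝ} (hs : |s| = 1) (x : ℝ) : s * x * s = x := by
  linear_combination x * mul_self_eq_one_of_abs_eq_one hs

theorem exists_abs_eq_one_mul_eq (a : ℝ) : ∃ s : ℝ, |s| = 1 ∧ |a| * s = a := by
  rcases le_total 0 a with ha | ha
  · exact ⟨1, abs_one, by rw [mul_one, abs_of_nonneg ha]⟩
  · exact ⟨-1, by simp, by rw [abs_of_nonpos ha]; ring⟩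

theorem abs_sub_mul_of_abs_eq_one {s : ℝ} (hs : |s| = 1) (x a : ℝ) :
    |x - a * s| = |s * x - a| := by
  rw [← one_mul |x - a * s|, ← hs, ← abs_mul]
  congr 1
  linear_combination (-a) * mul_self_eq_one_of_abs_eq_one hs

section LOne

variable {ι : Type*}

theorem sum_abs_le_norm (f : ℓ¹(ι)) (s : Finset ι) : ∑ i ∈ s, |f i| ≤ ‖f‖ := by
  simpa using lp.sum_rpow_le_norm_rpow (p := 1) (by simp) f s

theorem abs_le_norm (f : ℓ¹(ι)) (i : ι) : |f i| ≤ ‖f‖ :=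
  lp.norm_apply_le_norm one_ne_zero f i

variable [DecidableEq ι]

theorem norm_sub_sum_single (f : ℓ¹(ι)) (s : Finset ι) :
    ‖f - ∑ i ∈ s, lp.single 1 i (f i)‖ = ‖f‖ - ∑ i ∈ s, |f i| := by
  have h := lp.norm_sub_norm_compl_sub_single (p := 1) (E := fun _ : ι => ℝ) (by simp) f s
  simp only [ENNReal.toReal_one, Real.rpow_one, Real.norm_eq_abs] at h
  linarith

theorem eq_sum_single_of_norm_le {f : ℓ¹(ι)} {s : Finset ι} (h : ‖f‖ ≤ ∑ i ∈ s, |f i|) :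
    f = ∑ i ∈ s, lp.single 1 i (f i) := by
  rw [← sub_eq_zero, ← norm_le_zero_iff, norm_sub_sum_single]
  linarith

theorem norm_add_single (f : ℓ¹(ι)) (j : ι) (c : ℝ) :
    ‖f + lp.single 1 j c‖ = ‖f‖ - |f j| + |f j + c| := by
  have hf := norm_sub_sum_single f {j}
  have hfc := norm_sub_sum_single (f + lp.single 1 j c) {j}
  have hj : (f + lp.single 1 j c : ℓ¹(ι)) j = f j + c := by simp
  have hrest : f + lp.single 1 j c - lp.single 1 j (f j + c) = f - lp.single 1 j (f j) := by
    rw [lp.single_add]; abel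
  simp only [Finset.sum_singleton, hj, hrest] at hf hfc
  linarith

theorem norm_sub_single_mul {s : ℝ} (hs : |s| = 1) (f : ℓ¹(ι)) (j : ι) (a : ℝ) :
    ‖f - lp.single 1 j (a * s)‖ = ‖f‖ - |f j| + |s * f j - a| := by
  rw [sub_eq_add_neg, ← lp.single_neg, norm_add_single, ← sub_eq_add_neg,
    abs_sub_mul_of_abs_eq_one hs]

theorem norm_single_add_single {n m : ι} (hnm : n ≠ m) (a b : ℝ) :
    ‖(lp.single 1 n a + lp.single 1 m b : ℓ¹(ι))‖ = |a| + |b| := by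
  rw [norm_add_single, lp.norm_single (by simp), lp.single_apply_ne _ _ _ hnm.symm]
  simp

theorem norm_sub_single_mul_add_single_mul {n m : ι} (hnm : n ≠ m) {s₁ s₂ : ℝ}
    (hs₁ : |s₁| = 1) (hs₂ : |s₂| = 1) (f : ℓ¹(ι)) (a b : ℝ) :
    ‖f - (lp.single 1 n (a * s₁) + lp.single 1 m (b * s₂))‖
      = ‖f‖ - |f n| - |f m| + |s₁ * f n - a| + |s₂ * f m - b| := by
  have hm : (f - lp.single 1 n (a * s₁) : ℓ¹(ι)) m = f m := by
    simp [Pi.single_eq_of_ne hnm.symm]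
  rw [← sub_sub, norm_sub_single_mul hs₂, hm, norm_sub_single_mul hs₁]
  ring

theorem eq_single_of_norm_le {f : ℓ¹(ι)} {n : ι} (h : ‖f‖ ≤ |f n|) :
    f = lp.single 1 n (f n) := by
  simpa using eq_sum_single_of_norm_le (s := {n}) (by simpa using h)

theorem abs_add_abs_le_norm {n m : ι} (hnm : n ≠ m) (f : ℓ¹(ι)) : |f n| + |f m| ≤ ‖f‖ := by
  simpa [Finset.sum_pair hnm] using sum_abs_le_norm f {n, m}

theorem eq_single_add_single_of_norm_le {f : ℓ¹(ι)} {n m : ι} (hnm : n ≠ m)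
    (h : ‖f‖ ≤ |f n| + |f m|) : f = lp.single 1 n (f n) + lp.single 1 m (f m) := by
  simpa [Finset.sum_pair hnm] using
    eq_sum_single_of_norm_le (s := {n, m}) (by simpa [Finset.sum_pair hnm] using h)

theorem eq_single_mul_of_norm_le {w : ℓ¹(ι)} {n : ι} {s t : ℝ} (hs : |s| = 1)
    (h₁ : ‖w‖ ≤ t) (h₂ : ‖w - lp.single 1 n s‖ ≤ 1 - t) : w = lp.single 1 n (t * s) := by
  have e₂ := norm_sub_single_mul hs w n 1
  have hwn := abs_le_norm w n
  rw [one_mul] at e₂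
  rw [← abs_mul_of_abs_eq_one hs (w n)] at e₂ hwn
  have key : s * w n = t ∧ ‖w‖ ≤ |w n| := by
    rw [← abs_mul_of_abs_eq_one hs (w n)]
    rcases abs_cases (s * w n) with ⟨_, _⟩ | ⟨_, _⟩ <;>
      rcases abs_cases (s * w n - 1) with ⟨_, _⟩ | ⟨_, _⟩ <;> constructor <;> linarith
  rw [eq_single_of_norm_le key.2, ← key.1, mul_mul_self_of_abs_eq_one hs]

theorem eq_zero_of_norm_add_single_le_abs {w : ℓ¹(ι)} {c : ι → ℝ} {s : Finset ι}
    (hs : 2 < s.card) (h : ∀ j ∈ s, ‖w + lp.single 1 j (c j)‖ ≤ |c j|) : w = 0 := by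
  have hj : ∀ j ∈ s, ‖w‖ ≤ 2 * |w j| := by
    intro j hj
    have := h j hj
    rw [norm_add_single] at this
    have : |c j| ≤ |w j + c j| + |w j| := by
      simpa using abs_sub (w j + c j) (w j)
    linarith
  have hsum := Finset.sum_le_sum hj
  rw [Finset.sum_const, nsmul_eq_mul, ← Finset.mul_sum] at hsum
  have hcard : (3 : ℝ) ≤ s.card := by exact_mod_cast hs
  have := sum_abs_le_norm w s
  rw [← norm_le_zero_iff]
  nlinarith [norm_nonneg w]


theorem eq_zero_of_norm_sub_single_le_one {w : ℓ¹(ι)} {n : ι} {s : ℝ} (hs : |s| = 1)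
    (h₁ : ‖w - lp.single 1 n s‖ ≤ 1) (h₂ : ‖w - lp.single 1 n (-s)‖ ≤ 1) : w = 0 := by
  have e₁ := norm_sub_single_mul hs w n 1
  have e₂ := norm_sub_single_mul hs w n (-1)
  have hwn := abs_le_norm w n
  rw [one_mul] at e₁
  rw [neg_one_mul, sub_neg_eq_add] at e₂
  rw [← abs_mul_of_abs_eq_one hs (w n)] at e₁ e₂ hwn
  rw [← norm_le_zero_iff]
  rcases abs_cases (s * w n) with ⟨_, _⟩ | ⟨_, _⟩ <;>
    rcases abs_cases (s * w n - 1) with ⟨_, _⟩ | ⟨_, _⟩ <;>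
    rcases abs_cases (s * w n + 1) with ⟨_, _⟩ | ⟨_, _⟩ <;> linarith

theorem eq_single_mul_add_single_mul_of_norm_le {w : ℓ¹(ι)} {n m : ι} (hnm : n ≠ m) {s₁ s₂ : ℝ}
    (hs₁ : |s₁| = 1) (hs₂ : |s₂| = 1) (h : ‖w‖ ≤ |s₁ * w n| + |s₂ * w m|) :
    w = lp.single 1 n (s₁ * w n * s₁) + lp.single 1 m (s₂ * w m * s₂) := by
  rw [mul_mul_self_of_abs_eq_one hs₁, mul_mul_self_of_abs_eq_one hs₂]
  rw [abs_mul_of_abs_eq_one hs₁, abs_mul_of_abs_eq_one hs₂] at h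
  exact eq_single_add_single_of_norm_le hnm h

theorem exists_eq_of_norm_sub_single_le {w : ℓ¹(ι)} {n m : ι} (hnm : n ≠ m) {s₁ s₂ : ℝ}
    (hs₁ : |s₁| = 1) (hs₂ : |s₂| = 1) {α γ : ℝ}
    (h₁ : ‖w - lp.single 1 n (α * s₁)‖ ≤ γ) (h₂ : ‖w - lp.single 1 m (γ * s₂)‖ ≤ α) :
    ∃ ε, 0 ≤ ε ∧ ε ≤ α ∧ ε ≤ γ ∧
      w = lp.single 1 n ((α - ε) * s₁) + lp.single 1 m ((γ - ε) * s₂) := by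
  have e₁ := norm_sub_single_mul_add_single_mul hnm hs₁ hs₂ w α 0
  have e₂ := norm_sub_single_mul_add_single_mul hnm hs₁ hs₂ w 0 γ
  simp only [zero_mul, lp.single_zero, add_zero, zero_add, sub_zero] at e₁ e₂
  have hR := abs_add_abs_le_norm hnm w
  rw [← abs_mul_of_abs_eq_one hs₁ (w n), ← abs_mul_of_abs_eq_one hs₂ (w m)] at e₁ e₂ hR
  set p := s₁ * w n
  set q := s₂ * w m
  have key : 0 ≤ p ∧ p ≤ α ∧ 0 ≤ q ∧ α - p = γ - q ∧ ‖w‖ ≤ |p| + |q| := by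
    rcases abs_cases p with ⟨_, _⟩ | ⟨_, _⟩ <;> rcases abs_cases q with ⟨_, _⟩ | ⟨_, _⟩ <;>
      rcases abs_cases (p - α) with ⟨_, _⟩ | ⟨_, _⟩ <;>
      rcases abs_cases (q - γ) with ⟨_, _⟩ | ⟨_, _⟩ <;>
      refine ⟨?_, ?_, ?_, ?_, ?_⟩ <;> linarith
  obtain ⟨hp₀, hpα, hq₀, hpq, hw⟩ := key
  refine ⟨α - p, by linarith, by linarith, by linarith, ?_⟩
  rw [sub_sub_cancel, show γ - (α - p) = q by linarith]
  exact eq_single_mul_add_single_mul_of_norm_le hnm hs₁ hs₂ hw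

theorem exists_eq_of_norm_le_of_norm_sub_le {w : ℓ¹(ι)} {n m : ι} (hnm : n ≠ m) {s₁ s₂ : ℝ}
    (hs₁ : |s₁| = 1) (hs₂ : |s₂| = 1) {a b τ : ℝ} (hab : a + b = 1) (h₁ : ‖w‖ ≤ τ)
    (h₂ : ‖w - (lp.single 1 n (a * s₁) + lp.single 1 m (b * s₂))‖ ≤ 1 - τ) :
    ∃ c₁ c₂, 0 ≤ c₁ ∧ 0 ≤ c₂ ∧ c₁ + c₂ = τ ∧
      w = lp.single 1 n (c₁ * s₁) + lp.single 1 m (c₂ * s₂) := by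
  rw [norm_sub_single_mul_add_single_mul hnm hs₁ hs₂] at h₂
  have hR := abs_add_abs_le_norm hnm w
  rw [← abs_mul_of_abs_eq_one hs₁ (w n), ← abs_mul_of_abs_eq_one hs₂ (w m)] at h₂ hR
  set p := s₁ * w n
  set q := s₂ * w m
  have key : 0 ≤ p ∧ 0 ≤ q ∧ p + q = τ ∧ ‖w‖ ≤ |p| + |q| := by
    rcases abs_cases p with ⟨_, _⟩ | ⟨_, _⟩ <;> rcases abs_cases q with ⟨_, _⟩ | ⟨_, _⟩ <;>
      rcases abs_cases (p - a) with ⟨_, _⟩ | ⟨_, _⟩ <;>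
      rcases abs_cases (q - b) with ⟨_, _⟩ | ⟨_, _⟩ <;>
      refine ⟨?_, ?_, ?_, ?_⟩ <;> linarith
  obtain ⟨hp₀, hq₀, hpq, hw⟩ := key
  exact ⟨p, q, hp₀, hq₀, hpq, eq_single_mul_add_single_mul_of_norm_le hnm hs₁ hs₂ hw⟩

theorem norm_sum_single (s : Finset ι) (a : ι → ℝ) :
    ‖∑ i ∈ s, lp.single 1 i (a i)‖ = ∑ i ∈ s, |a i| := by
  simpa using lp.norm_sum_single (p := 1) (E := fun _ : ι => ℝ) (by simp) a s

theorem norm_single_mul_add_single_mul {n m : ι} (hnm : n ≠ m) {s₁ s₂ : ℝ} (hs₁ : |s₁| = 1)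
    (hs₂ : |s₂| = 1) (a b : ℝ) :
    ‖(lp.single 1 n (a * s₁) + lp.single 1 m (b * s₂) : ℓ¹(ι))‖ = |a| + |b| := by
  rw [norm_single_add_single hnm, abs_mul, abs_mul, hs₁, hs₂, mul_one, mul_one]

theorem eq_of_single_mul_add_single_mul_eq {n m : ι} (hnm : n ≠ m) {s₁ s₂ : ℝ}
    (hs₁ : |s₁| = 1) (hs₂ : |s₂| = 1) {a b a' b' : ℝ}
    (h : (lp.single 1 n (a * s₁) + lp.single 1 m (b * s₂) : ℓ¹(ι))
      = (lp.single 1 n (a' * s₁) + lp.single 1 m (b' * s₂) : ℓ¹(ι))) : a = a' ∧ b = b' := by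
  have hn := congrArg (fun f : ℓ¹(ι) => f n) h
  have hm := congrArg (fun f : ℓ¹(ι) => f m) h
  have hs₁₀ : s₁ ≠ 0 := by rintro rfl; simp at hs₁
  have hs₂₀ : s₂ ≠ 0 := by rintro rfl; simp at hs₂
  simp [Pi.single_eq_of_ne hnm, Pi.single_eq_of_ne hnm.symm, hs₁₀, hs₂₀] at hn hm
  exact ⟨hn, hm⟩

end LOne

section NormedSpace

variable {X : Type*} [NormedAddCommGroup X] [NormedSpace ℝ X]

theorem norm_smul_le_abs {b : X} (hb : ‖b‖ ≤ 1) (t : ℝ) : ‖t • b‖ ≤ |t| := by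
  rw [norm_smul, Real.norm_eq_abs]
  exact mul_le_of_le_one_right (abs_nonneg t) hb

theorem norm_smul_le_of_nonneg {b : X} (hb : ‖b‖ ≤ 1) {t : ℝ} (ht : 0 ≤ t) : ‖t • b‖ ≤ t := by
  simpa [abs_of_nonneg ht] using norm_smul_le_abs hb t

theorem norm_smul_add_smul_le {x y : X} (hx : ‖x‖ ≤ 1) (hy : ‖y‖ ≤ 1) {a b : ℝ} (ha : 0 ≤ a)
    (hb : 0 ≤ b) : ‖a • x + b • y‖ ≤ a + b := by
  calc ‖a • x + b • y‖ ≤ |a| + |b| :=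
        (norm_add_le _ _).trans (add_le_add (norm_smul_le_abs hx a) (norm_smul_le_abs hy b))
    _ = a + b := by rw [abs_of_nonneg ha, abs_of_nonneg hb]

theorem add_le_norm_smul_add_smul {x y : X} (hx : ‖x‖ ≤ 1) (hy : ‖y‖ ≤ 1) (hxy : 2 ≤ ‖x + y‖)
    {a b : ℝ} (ha : 0 ≤ a) (hb : 0 ≤ b) : a + b ≤ ‖a • x + b • y‖ := by
  wlog hba : b ≤ a generalizing a b x y
  · rw [add_comm a, add_comm (a • x)]
    exact this hy hx (by rwa [add_comm]) hb ha (by linarith)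
  have h := norm_add_le (a • x + b • y) ((a - b) • y)
  rw [show a • x + b • y + (a - b) • y = a • (x + y) by module, norm_smul,
    Real.norm_of_nonneg ha] at h
  have := norm_smul_le_abs hy (a - b)
  rw [abs_of_nonneg (by linarith)] at this
  nlinarith

theorem norm_sum_smul_le {ι : Type*} (s : Finset ι) (a : ι → ℝ) {g : ι → X}
    (hg : ∀ i, ‖g i‖ ≤ 1) : ‖∑ i ∈ s, a i • g i‖ ≤ ∑ i ∈ s, |a i| :=
  norm_sum_le_of_le s fun i _ => norm_smul_le_abs (hg i) (a i)

end NormedSpace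

section Nonexpansive

variable {X E : Type*} [NormedAddCommGroup X] [NormedAddCommGroup E] {F : X → E}

theorem continuousOn_of_nonexpansive
    (hF : ∀ x ∈ closedBall (0 : X) 1, ∀ y ∈ closedBall (0 : X) 1, ‖F x - F y‖ ≤ ‖x - y‖) :
    ContinuousOn F (closedBall 0 1) :=
  (LipschitzOnWith.of_dist_le_mul (K := 1) fun x hx y hy => by
    simpa [dist_eq_norm] using hF x hx y hy).continuousOn

theorem norm_apply_le
    (hF : ∀ x ∈ closedBall (0 : X) 1, ∀ y ∈ closedBall (0 : X) 1, ‖F x - F y‖ ≤ ‖x - y‖)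
    (hF0 : F 0 = 0) {z : X} (hz : ‖z‖ ≤ 1) : ‖F z‖ ≤ ‖z‖ := by
  simpa [hF0] using hF z (mem_closedBall_zero_iff.2 hz) 0 (mem_closedBall_self zero_le_one)

theorem norm_apply_smul_le_and_norm_apply_smul_sub_le [NormedSpace ℝ X]
    (hF : ∀ x ∈ closedBall (0 : X) 1, ∀ y ∈ closedBall (0 : X) 1, ‖F x - F y‖ ≤ ‖x - y‖)
    (hF0 : F 0 = 0) {v : X} (hv : ‖v‖ ≤ 1) {τ : ℝ} (hτ₀ : 0 ≤ τ) (hτ₁ : τ ≤ 1) :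
    ‖F (τ • v)‖ ≤ τ ∧ ‖F (τ • v) - F v‖ ≤ 1 - τ := by
  have hτv : ‖τ • v‖ ≤ τ := norm_smul_le_of_nonneg hv hτ₀
  refine ⟨(norm_apply_le hF hF0 (hτv.trans hτ₁)).trans hτv, ?_⟩
  calc ‖F (τ • v) - F v‖ ≤ ‖τ • v - v‖ :=
        hF _ (mem_closedBall_zero_iff.2 (hτv.trans hτ₁)) _ (mem_closedBall_zero_iff.2 hv)
    _ = ‖(1 - τ) • v‖ := by rw [← norm_neg, neg_sub, sub_smul, one_smul]
    _ ≤ 1 - τ := norm_smul_le_of_nonneg hv (sub_nonneg.2 hτ₁)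

theorem apply_zero_of_surjOn [NormedSpace ℝ E] (hsurj : SurjOn F (closedBall 0 1) (closedBall 0 1))
    (hF : ∀ x ∈ closedBall (0 : X) 1, ∀ y ∈ closedBall (0 : X) 1, ‖F x - F y‖ ≤ ‖x - y‖) :
    F 0 = 0 := by
  by_contra h
  have hpos : 0 < ‖F 0‖ := norm_pos_iff.2 h
  set w := -‖F 0‖⁻¹ • F 0
  have hw : ‖w‖ = 1 := by
    rw [norm_smul, norm_neg, norm_inv, norm_norm, inv_mul_cancel₀ hpos.ne']
  obtain ⟨z, hz, hFz⟩ := hsurj (mem_closedBall_zero_iff.2 hw.le)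
  have hdist : ‖w - F 0‖ = 1 + ‖F 0‖ := by
    rw [show w - F 0 = -(‖F 0‖⁻¹ + 1) • F 0 by module, norm_smul, norm_neg,
      Real.norm_of_nonneg (by positivity), add_mul, inv_mul_cancel₀ hpos.ne', one_mul]
  have := hF z hz 0 (mem_closedBall_self zero_le_one)
  rw [hFz, hdist, sub_zero] at this
  linarith [mem_closedBall_zero_iff.1 hz]

end Nonexpansive

section BallOntoL1

variable {X : Type*} [NormedAddCommGroup X] [NormedSpace ℝ X] {ι : Type*} [DecidableEq ι]
  {F : X → ℓ¹(ι)}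
  (hF : ∀ x ∈ closedBall (0 : X) 1, ∀ y ∈ closedBall (0 : X) 1, ‖F x - F y‖ ≤ ‖x - y‖)
  (hF0 : F 0 = 0) (hbij : BijOn F (closedBall 0 1) (closedBall 0 1))

include hF hF0 in
theorem apply_smul_of_apply_eq_single_of_nonneg {b : X} {n : ι} {s t : ℝ} (hb : ‖b‖ ≤ 1)
    (hFb : F b = lp.single 1 n s) (hs : |s| = 1) (ht₀ : 0 ≤ t) (ht₁ : t ≤ 1) :
    F (t • b) = lp.single 1 n (t * s) := by
  obtain ⟨h₁, h₂⟩ := norm_apply_smul_le_and_norm_apply_smul_sub_le hF hF0 hb ht₀ ht₁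
  exact eq_single_mul_of_norm_le hs h₁ (hFb ▸ h₂)

include hF hF0 hbij in
theorem apply_neg_of_apply_eq_single {b : X} {n : ι} {s : ℝ} (hb : ‖b‖ ≤ 1)
    (hFb : F b = lp.single 1 n s) (hs : |s| = 1) : F (-b) = lp.single 1 n (-s) := by
  have hmem : lp.single 1 n (-s) ∈ closedBall (0 : ℓ¹(ι)) 1 := by
    rw [mem_closedBall_zero_iff, lp.norm_single (by simp), Real.norm_eq_abs, abs_neg, hs]
  obtain ⟨b', hb', hFb'⟩ := hbij.surjOn hmem
  rw [mem_closedBall_zero_iff] at hb'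
  have half {x y : X} (hx : ‖x‖ ≤ 1) (hy : ‖y‖ ≤ 1) : ‖(1 / 2 : ℝ) • x + (1 / 2 : ℝ) • y‖ ≤ 1 :=
    (norm_smul_add_smul_le hx hy (by norm_num) (by norm_num)).trans (by norm_num)
  -- the midpoint of `b` and `b' = F⁻¹ (-s eₙ)` is within `1` of both, so `F` sends it to `0`
  set M : X := (1 / 2 : ℝ) • b + (1 / 2 : ℝ) • b'
  have hM : M ∈ closedBall (0 : X) 1 := mem_closedBall_zero_iff.2 (half hb hb')
  have hMb : ‖M - b‖ ≤ 1 := by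
    rw [show M - b = (1 / 2 : ℝ) • b' + (1 / 2 : ℝ) • (-b) by module]
    exact half hb' (by rwa [norm_neg])
  have hMb' : ‖M - b'‖ ≤ 1 := by
    rw [show M - b' = (1 / 2 : ℝ) • b + (1 / 2 : ℝ) • (-b') by module]
    exact half hb (by rwa [norm_neg])
  have hFM : F M = 0 := eq_zero_of_norm_sub_single_le_one hs
    (hFb ▸ (hF _ hM _ (mem_closedBall_zero_iff.2 hb)).trans hMb)
    (hFb' ▸ (hF _ hM _ (mem_closedBall_zero_iff.2 hb')).trans hMb')
  have hM0 : M = 0 := hbij.injOn hM (mem_closedBall_self zero_le_one) (hFM.trans hF0.symm)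
  have hbb' : b + b' = 0 := by
    rw [show b + b' = (2 : ℝ) • M by module, hM0, smul_zero]
  rw [neg_eq_of_add_eq_zero_right hbb', hFb']

include hF hF0 hbij in
theorem apply_smul_of_apply_eq_single {b : X} {n : ι} {s t : ℝ} (hb : ‖b‖ ≤ 1)
    (hFb : F b = lp.single 1 n s) (hs : |s| = 1) (ht : |t| ≤ 1) :
    F (t • b) = lp.single 1 n (t * s) := by
  rcases le_total 0 t with ht₀ | ht₀
  · exact apply_smul_of_apply_eq_single_of_nonneg hF hF0 hb hFb hs ht₀ (abs_le.1 ht).2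
  · have := apply_smul_of_apply_eq_single_of_nonneg hF hF0 (t := -t) (by rwa [norm_neg])
      (apply_neg_of_apply_eq_single hF hF0 hbij hb hFb hs) (by rwa [abs_neg]) (neg_nonneg.2 ht₀)
      (by linarith [(abs_le.1 ht).1])
    rwa [neg_smul_neg, neg_mul_neg] at this

section Pair

variable {b₁ b₂ : X} {n m : ι} {s₁ s₂ : ℝ} (hnm : n ≠ m) (hb₁ : ‖b₁‖ ≤ 1) (hb₂ : ‖b₂‖ ≤ 1)
  (hFb₁ : F b₁ = lp.single 1 n s₁) (hFb₂ : F b₂ = lp.single 1 m s₂) (hs₁ : |s₁| = 1)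
  (hs₂ : |s₂| = 1)

include hF hF0 hbij hnm hb₁ hb₂ hFb₁ hFb₂ hs₁ hs₂ in
theorem two_le_norm_add : 2 ≤ ‖b₁ + b₂‖ := by
  have h := hF b₁ (mem_closedBall_zero_iff.2 hb₁) (-b₂)
    (mem_closedBall_zero_iff.2 (by rwa [norm_neg]))
  rw [hFb₁, apply_neg_of_apply_eq_single hF hF0 hbij hb₂ hFb₂ hs₂, lp.single_neg, sub_neg_eq_add,
    sub_neg_eq_add, norm_single_add_single hnm, hs₁, hs₂] at h
  linarith

include hF hF0 hnm hb₁ hb₂ hFb₁ hFb₂ hs₁ hs₂ in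
theorem exists_apply_smul_add_smul {α γ : ℝ} (hα : 0 ≤ α) (hγ : 0 ≤ γ) (hαγ : α + γ ≤ 1) :
    ∃ ε, 0 ≤ ε ∧ ε ≤ α ∧ ε ≤ γ ∧
      F (α • b₁ + γ • b₂) = lp.single 1 n ((α - ε) * s₁) + lp.single 1 m ((γ - ε) * s₂) := by
  have hz := mem_closedBall_zero_iff.2 ((norm_smul_add_smul_le hb₁ hb₂ hα hγ).trans hαγ)
  refine exists_eq_of_norm_sub_single_le hnm hs₁ hs₂ ?_ ?_
  · have hαb₁ := norm_smul_le_of_nonneg hb₁ hα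
    rw [← apply_smul_of_apply_eq_single_of_nonneg hF hF0 hb₁ hFb₁ hs₁ hα (by linarith)]
    refine (hF _ hz _ (mem_closedBall_zero_iff.2 (by linarith))).trans ?_
    rw [add_sub_cancel_left]
    exact norm_smul_le_of_nonneg hb₂ hγ
  · have hγb₂ := norm_smul_le_of_nonneg hb₂ hγ
    rw [← apply_smul_of_apply_eq_single_of_nonneg hF hF0 hb₂ hFb₂ hs₂ hγ (by linarith)]
    refine (hF _ hz _ (mem_closedBall_zero_iff.2 (by linarith))).trans ?_
    rw [add_sub_cancel_right]
    exact norm_smul_le_of_nonneg hb₁ hα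

include hF hF0 hnm hb₁ hb₂ hFb₁ hFb₂ hs₁ hs₂ in
theorem apply_smul_add_smul_of_le_norm {α γ : ℝ} (hα : 0 ≤ α) (hγ : 0 ≤ γ) (hαγ : α + γ ≤ 1)
    (h : α + γ ≤ ‖F (α • b₁ + γ • b₂)‖) :
    F (α • b₁ + γ • b₂) = lp.single 1 n (α * s₁) + lp.single 1 m (γ * s₂) := by
  obtain ⟨ε, hε₀, hεα, hεγ, hFz⟩ :=
    exists_apply_smul_add_smul hF hF0 hnm hb₁ hb₂ hFb₁ hFb₂ hs₁ hs₂ hα hγ hαγ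
  rw [hFz, norm_single_mul_add_single_mul hnm hs₁ hs₂, abs_of_nonneg (sub_nonneg.2 hεα),
    abs_of_nonneg (sub_nonneg.2 hεγ)] at h
  rw [hFz, show ε = 0 by linarith, sub_zero, sub_zero]

include hF hF0 hnm hs₁ hs₂ in
theorem exists_apply_smul_eq {v : X} {a b τ : ℝ} (hv : ‖v‖ ≤ 1) (hab : a + b = 1)
    (hFv : F v = lp.single 1 n (a * s₁) + lp.single 1 m (b * s₂)) (hτ₀ : 0 ≤ τ) (hτ₁ : τ ≤ 1) :
    ∃ c₁ c₂, 0 ≤ c₁ ∧ 0 ≤ c₂ ∧ c₁ + c₂ = τ ∧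
      F (τ • v) = lp.single 1 n (c₁ * s₁) + lp.single 1 m (c₂ * s₂) := by
  obtain ⟨h₁, h₂⟩ := norm_apply_smul_le_and_norm_apply_smul_sub_le hF hF0 hv hτ₀ hτ₁
  exact exists_eq_of_norm_le_of_norm_sub_le hnm hs₁ hs₂ hab h₁ (hFv ▸ h₂)

include hF hF0 hnm hb₁ hb₂ hFb₁ hFb₂ hs₁ hs₂ in
theorem exists_apply_smul_add_smul_eq {c₁ c₂ t : ℝ} (hc₁ : 0 ≤ c₁) (hc₂ : 0 ≤ c₂)
    (hc : c₁ + c₂ ≤ 1) (ht : 2 * t = 1 + c₁ - c₂)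
    (hct : c₁ + c₂ ≤ ‖F (t • b₁ + (1 - t) • b₂)‖) :
    ∃ α γ : ℝ, 0 ≤ α ∧ 0 ≤ γ ∧ α + γ ≤ 1 ∧
      F (α • b₁ + γ • b₂) = lp.single 1 n (c₁ * s₁) + lp.single 1 m (c₂ * s₂) := by
  set d := c₁ - c₂
  have hd : |d| ≤ c₁ + c₂ := abs_sub_le_iff.2 ⟨by linarith, by linarith⟩
  -- on the segment `z`, the image always has coefficient difference `d`
  -- (`exists_apply_smul_add_smul`); the intermediate value theorem adjusts its norm to `c₁ + c₂`
  set z : ℝ → X := fun σ => ((σ + d) / 2) • b₁ + ((σ - d) / 2) • b₂ with hz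
  have hcoef : ∀ σ ∈ Icc |d| 1, 0 ≤ (σ + d) / 2 ∧ 0 ≤ (σ - d) / 2 := fun σ hσ =>
    ⟨by linarith [neg_abs_le d, hσ.1], by linarith [le_abs_self d, hσ.1]⟩
  have hnorm : ∀ σ ∈ Icc |d| 1, ‖z σ‖ ≤ σ := fun σ hσ =>
    (norm_smul_add_smul_le hb₁ hb₂ (hcoef σ hσ).1 (hcoef σ hσ).2).trans_eq (by ring)
  have hcont : ContinuousOn (fun σ => ‖F (z σ)‖) (Icc |d| 1) :=
    ((continuousOn_of_nonexpansive hF).comp (by fun_prop : Continuous z).continuousOn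
      fun σ hσ => mem_closedBall_zero_iff.2 ((hnorm σ hσ).trans hσ.2)).norm
  have hd₁ : |d| ∈ Icc |d| 1 := ⟨le_rfl, hd.trans hc⟩
  have hlow : ‖F (z |d|)‖ ≤ c₁ + c₂ :=
    ((norm_apply_le hF hF0 ((hnorm _ hd₁).trans hd₁.2)).trans (hnorm _ hd₁)).trans hd
  have hhigh : c₁ + c₂ ≤ ‖F (((1 + d) / 2) • b₁ + ((1 - d) / 2) • b₂)‖ := by
    rwa [show (1 + d) / 2 = t by linarith, show (1 - d) / 2 = 1 - t by linarith]
  obtain ⟨σ, hσ, hσc⟩ := intermediate_value_Icc (hd.trans hc) hcont ⟨hlow, hhigh⟩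
  obtain ⟨ε, hε₀, hεα, hεγ, hFz⟩ := exists_apply_smul_add_smul hF hF0 hnm hb₁ hb₂ hFb₁ hFb₂ hs₁
    hs₂ (hcoef σ hσ).1 (hcoef σ hσ).2 (by linarith [hσ.2])
  simp only [hz, hFz, norm_single_mul_add_single_mul hnm hs₁ hs₂,
    abs_of_nonneg (sub_nonneg.2 hεα), abs_of_nonneg (sub_nonneg.2 hεγ)] at hσc
  refine ⟨(σ + d) / 2, (σ - d) / 2, (hcoef σ hσ).1, (hcoef σ hσ).2, by linarith [hσ.2], ?_⟩
  rw [hFz, show (σ + d) / 2 - ε = c₁ by linarith, show (σ - d) / 2 - ε = c₂ by linarith]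

include hF hF0 hbij hnm hb₁ hb₂ hFb₁ hFb₂ hs₁ hs₂ in
theorem eq_of_apply_smul_add_smul_eq {α γ θ : ℝ} (hα : 0 ≤ α) (hγ : 0 ≤ γ)
    (hz : ‖α • b₁ + γ • b₂‖ ≤ 1) (hθ₀ : 0 ≤ θ) (hθ₁ : θ ≤ 1)
    (h : F (α • b₁ + γ • b₂) = lp.single 1 n (θ * s₁) + lp.single 1 m ((1 - θ) * s₂)) :
    α = θ ∧ γ = 1 - θ := by
  have hαγ : α + γ ≤ 1 :=
    (add_le_norm_smul_add_smul hb₁ hb₂ (two_le_norm_add hF hF0 hbij hnm hb₁ hb₂ hFb₁ hFb₂ hs₁ hs₂)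
      hα hγ).trans hz
  have hnorm : α + γ ≤ ‖F (α • b₁ + γ • b₂)‖ := by
    rwa [h, norm_single_mul_add_single_mul hnm hs₁ hs₂, abs_of_nonneg hθ₀,
      abs_of_nonneg (sub_nonneg.2 hθ₁), add_sub_cancel]
  rw [apply_smul_add_smul_of_le_norm hF hF0 hnm hb₁ hb₂ hFb₁ hFb₂ hs₁ hs₂ hα hγ hαγ hnorm] at h
  exact eq_of_single_mul_add_single_mul_eq hnm hs₁ hs₂ h

include hF hF0 hbij hnm hb₁ hb₂ hFb₁ hFb₂ hs₁ hs₂ in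
theorem apply_smul_add_one_sub_smul_of_forall_le_norm {μ θ : ℝ} (hμ₀ : 0 < μ) (hμ₁ : μ ≤ 1)
    (hmin : ∀ t ∈ Icc (0 : ℝ) 1, μ ≤ ‖F (t • b₁ + (1 - t) • b₂)‖) (hθ₀ : 0 ≤ θ) (hθ₁ : θ ≤ 1) :
    F (θ • b₁ + (1 - θ) • b₂) = lp.single 1 n (θ * s₁) + lp.single 1 m ((1 - θ) * s₂) := by
  have hy : ‖(lp.single 1 n (θ * s₁) + lp.single 1 m ((1 - θ) * s₂) : ℓ¹(ι))‖ = 1 := by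
    rw [norm_single_mul_add_single_mul hnm hs₁ hs₂, abs_of_nonneg hθ₀,
      abs_of_nonneg (sub_nonneg.2 hθ₁), add_sub_cancel]
  obtain ⟨v, hv, hFv⟩ := hbij.surjOn (mem_closedBall_zero_iff.2 hy.le)
  rw [mem_closedBall_zero_iff] at hv
  obtain ⟨c₁, c₂, hc₁, hc₂, hc, hFμv⟩ :=
    exists_apply_smul_eq hF hF0 hnm hs₁ hs₂ hv (add_sub_cancel θ 1) hFv hμ₀.le hμ₁
  obtain ⟨α, γ, hα, hγ, hαγ, hFz⟩ := exists_apply_smul_add_smul_eq hF hF0 hnm hb₁ hb₂ hFb₁ hFb₂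
    hs₁ hs₂ hc₁ hc₂ (by linarith) (t := (1 + c₁ - c₂) / 2) (by ring)
    (hc ▸ hmin _ ⟨by linarith, by linarith⟩)
  have hz : α • b₁ + γ • b₂ = μ • v :=
    hbij.injOn (mem_closedBall_zero_iff.2 ((norm_smul_add_smul_le hb₁ hb₂ hα hγ).trans hαγ))
      (mem_closedBall_zero_iff.2 ((norm_smul_le_of_nonneg hv hμ₀.le).trans hμ₁))
      (hFz.trans hFμv.symm)
  have hv' : (α / μ) • b₁ + (γ / μ) • b₂ = v := by
    rw [div_eq_inv_mul, div_eq_inv_mul, mul_smul, mul_smul, ← smul_add, hz, smul_smul,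
      inv_mul_cancel₀ hμ₀.ne', one_smul]
  obtain ⟨hαθ, hγθ⟩ := eq_of_apply_smul_add_smul_eq hF hF0 hbij hnm hb₁ hb₂ hFb₁ hFb₂ hs₁ hs₂
    (by positivity) (by positivity) (hv' ▸ hv) hθ₀ hθ₁ (hv' ▸ hFv)
  have hvθ : θ • b₁ + (1 - θ) • b₂ = v := by rw [← hγθ, ← hαθ, hv']
  rw [hvθ, hFv]

include hF hF0 hbij hnm hb₁ hb₂ hFb₁ hFb₂ hs₁ hs₂ in
theorem one_le_norm_apply_smul_add_smul {t : ℝ} (ht₀ : 0 ≤ t) (ht₁ : t ≤ 1) :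
    1 ≤ ‖F (t • b₁ + (1 - t) • b₂)‖ := by
  have hedge : ∀ t ∈ Icc (0 : ℝ) 1, t • b₁ + (1 - t) • b₂ ∈ closedBall (0 : X) 1 := fun t ht =>
    mem_closedBall_zero_iff.2 ((norm_smul_add_smul_le hb₁ hb₂ ht.1 (sub_nonneg.2 ht.2)).trans
      (by linarith))
  have hcont : ContinuousOn (fun t : ℝ => ‖F (t • b₁ + (1 - t) • b₂)‖) (Icc 0 1) :=
    ((continuousOn_of_nonexpansive hF).comp (by fun_prop) hedge).norm
  obtain ⟨θ, hθ, hmin⟩ := isCompact_Icc.exists_isMinOn (nonempty_Icc.2 zero_le_one) hcont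
  refine le_trans ?_ (hmin ⟨ht₀, ht₁⟩)
  by_contra! hμ
  have hμ₀ : 0 < ‖F (θ • b₁ + (1 - θ) • b₂)‖ := by
    refine norm_pos_iff.2 fun h0 => ?_
    have hz := hbij.injOn (hedge θ hθ) (mem_closedBall_self zero_le_one) (h0.trans hF0.symm)
    have := add_le_norm_smul_add_smul hb₁ hb₂
      (two_le_norm_add hF hF0 hbij hnm hb₁ hb₂ hFb₁ hFb₂ hs₁ hs₂) hθ.1 (sub_nonneg.2 hθ.2)
    rw [hz, norm_zero] at this
    linarith
  have hFθ := apply_smul_add_one_sub_smul_of_forall_le_norm hF hF0 hbij hnm hb₁ hb₂ hFb₁ hFb₂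
    hs₁ hs₂ hμ₀ hμ.le (fun t ht => hmin ht) hθ.1 hθ.2
  rw [hFθ, norm_single_mul_add_single_mul hnm hs₁ hs₂, abs_of_nonneg hθ.1,
    abs_of_nonneg (sub_nonneg.2 hθ.2), add_sub_cancel] at hμ
  exact lt_irrefl _ hμ

include hF hF0 hbij hnm hb₁ hb₂ hFb₁ hFb₂ hs₁ hs₂ in
theorem apply_smul_add_smul_of_nonneg {α γ : ℝ} (hα : 0 ≤ α) (hγ : 0 ≤ γ) (hαγ : α + γ ≤ 1) :
    F (α • b₁ + γ • b₂) = lp.single 1 n (α * s₁) + lp.single 1 m (γ * s₂) := by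
  refine apply_smul_add_smul_of_le_norm hF hF0 hnm hb₁ hb₂ hFb₁ hFb₂ hs₁ hs₂ hα hγ hαγ ?_
  -- compare with the hypotenuse point obtained by adding `δ` to both coefficients
  set δ := (1 - α - γ) / 2 with hδ_def
  have hδ : 0 ≤ δ := by linarith
  have hedge := one_le_norm_apply_smul_add_smul hF hF0 hbij hnm hb₁ hb₂ hFb₁ hFb₂ hs₁ hs₂
    (t := α + δ) (by linarith) (by linarith)
  rw [show 1 - (α + δ) = γ + δ by linarith] at hedge
  have hdist : ‖F ((α + δ) • b₁ + (γ + δ) • b₂) - F (α • b₁ + γ • b₂)‖ ≤ 2 * δ := by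
    refine (hF _ (mem_closedBall_zero_iff.2 ((norm_smul_add_smul_le hb₁ hb₂ (by linarith)
      (by linarith)).trans (by linarith))) _ (mem_closedBall_zero_iff.2
      ((norm_smul_add_smul_le hb₁ hb₂ hα hγ).trans hαγ))).trans ?_
    rw [show (α + δ) • b₁ + (γ + δ) • b₂ - (α • b₁ + γ • b₂) = δ • b₁ + δ • b₂ by module]
    linarith [norm_smul_add_smul_le hb₁ hb₂ hδ hδ]
  linarith [norm_sub_norm_le (F ((α + δ) • b₁ + (γ + δ) • b₂)) (F (α • b₁ + γ • b₂))]

include hF hF0 hbij hnm hb₁ hb₂ hFb₁ hFb₂ hs₁ hs₂ in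
theorem apply_smul_add_smul {α γ : ℝ} (h : |α| + |γ| ≤ 1) :
    F (α • b₁ + γ • b₂) = lp.single 1 n (α * s₁) + lp.single 1 m (γ * s₂) := by
  obtain ⟨σ₁, hσ₁, hασ₁⟩ := exists_abs_eq_one_mul_eq α
  obtain ⟨σ₂, hσ₂, hγσ₂⟩ := exists_abs_eq_one_mul_eq γ
  have := apply_smul_add_smul_of_nonneg hF hF0 hbij hnm
    (by simpa using norm_smul_le_abs hb₁ σ₁ |>.trans hσ₁.le)
    (by simpa using norm_smul_le_abs hb₂ σ₂ |>.trans hσ₂.le)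
    (apply_smul_of_apply_eq_single hF hF0 hbij hb₁ hFb₁ hs₁ hσ₁.le)
    (apply_smul_of_apply_eq_single hF hF0 hbij hb₂ hFb₂ hs₂ hσ₂.le)
    (by rw [abs_mul, hσ₁, hs₁, one_mul]) (by rw [abs_mul, hσ₂, hs₂, one_mul])
    (abs_nonneg α) (abs_nonneg γ) h
  rwa [smul_smul, smul_smul, ← mul_assoc, ← mul_assoc, hασ₁, hγσ₂] at this

end Pair

section Generators

variable {g : ι → X} (hg : ∀ i, ‖g i‖ ≤ 1) (hFg : ∀ i, F (g i) = lp.single 1 i 1)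

include hF hF0 hbij hg hFg in
theorem apply_sum_smul_of_card_le_two {s : Finset ι} (hs : s.card ≤ 2) {a : ι → ℝ}
    (ha : ∑ i ∈ s, |a i| ≤ 1) : F (∑ i ∈ s, a i • g i) = ∑ i ∈ s, lp.single 1 i (a i) := by
  interval_cases h : s.card
  · simp [Finset.card_eq_zero.1 h, hF0]
  · obtain ⟨i, rfl⟩ := Finset.card_eq_one.1 h
    simp only [Finset.sum_singleton] at ha ⊢
    rw [apply_smul_of_apply_eq_single hF hF0 hbij (hg i) (hFg i) abs_one ha, mul_one]
  · obtain ⟨i, j, hij, rfl⟩ := Finset.card_eq_two.1 h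
    rw [Finset.sum_pair hij] at ha ⊢
    rw [Finset.sum_pair hij]
    simpa using apply_smul_add_smul hF hF0 hbij hij (hg i) (hg j) (hFg i) (hFg j) abs_one abs_one ha

include hF hF0 hbij hg hFg in
theorem apply_sum_smul (s : Finset ι) {a : ι → ℝ} (ha : ∑ i ∈ s, |a i| ≤ 1) :
    F (∑ i ∈ s, a i • g i) = ∑ i ∈ s, lp.single 1 i (a i) := by
  induction s using Finset.strongInduction with
  | H s ih =>
  rcases le_or_gt s.card 2 with hs | hs
  · exact apply_sum_smul_of_card_le_two hF hF0 hbij hg hFg hs ha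
  rw [← sub_eq_zero]
  refine eq_zero_of_norm_add_single_le_abs (c := a) hs fun j hj => ?_
  have ha' : ∑ i ∈ s.erase j, |a i| ≤ 1 :=
    (Finset.sum_le_sum_of_subset_of_nonneg (Finset.erase_subset j s) fun _ _ _ =>
      abs_nonneg _).trans ha
  have hFj := ih _ (Finset.erase_ssubset hj) ha'
  have hx' := (norm_sum_smul_le _ a hg).trans ha'
  rw [Finset.sum_erase_eq_sub hj, Finset.sum_erase_eq_sub hj] at hFj
  rw [Finset.sum_erase_eq_sub hj] at hx'
  calc ‖F (∑ i ∈ s, a i • g i) - ∑ i ∈ s, lp.single 1 i (a i) + lp.single 1 j (a j)‖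
      = ‖F (∑ i ∈ s, a i • g i) - F (∑ i ∈ s, a i • g i - a j • g j)‖ := by
        rw [hFj]
        congr 1
        abel
    _ ≤ ‖a j • g j‖ := by
        simpa using hF _ (mem_closedBall_zero_iff.2 ((norm_sum_smul_le s a hg).trans ha)) _
          (mem_closedBall_zero_iff.2 hx')
    _ ≤ |a j| := norm_smul_le_abs (hg j) (a j)

include hF hF0 hbij hg hFg in
theorem norm_sum_smul (s : Finset ι) (a : ι → ℝ) :
    ‖∑ i ∈ s, a i • g i‖ = ∑ i ∈ s, |a i| := by
  refine le_antisymm (norm_sum_smul_le s a hg) ?_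
  rcases (Finset.sum_nonneg fun i _ => abs_nonneg (a i) : 0 ≤ ∑ i ∈ s, |a i|).eq_or_lt with hS | hS
  · rw [← hS]
    exact norm_nonneg _
  set S := ∑ i ∈ s, |a i|
  have hmass : ∑ i ∈ s, |S⁻¹ * a i| = 1 := by
    rw [← inv_mul_cancel₀ hS.ne', Finset.mul_sum]
    exact Finset.sum_congr rfl fun i _ => by rw [abs_mul, abs_of_pos (inv_pos.2 hS)]
  have h := norm_apply_le hF hF0 ((norm_sum_smul_le s _ hg).trans hmass.le)
  rw [apply_sum_smul hF hF0 hbij hg hFg s hmass.le, norm_sum_single, hmass] at h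
  simp_rw [mul_smul] at h
  rw [← Finset.smul_sum, norm_smul, Real.norm_of_nonneg (inv_nonneg.2 hS.le)] at h
  rwa [← div_eq_inv_mul, one_le_div hS] at h

end Generators

end BallOntoL1

end Plasticity

open Plasticity

theorem nonexpansive_bijection_l1_claim_finite_sums_general
    {X : Type*} [NormedAddCommGroup X] [NormedSpace ℝ X]
    (F : X → lp (fun _ : ℕ => ℝ) 1)
    (hbij : Set.BijOn F (closedBall (0 : X) 1)
      (closedBall (0 : lp (fun _ : ℕ => ℝ) 1) 1))
    (hne : ∀ x ∈ closedBall (0 : X) 1, ∀ y ∈ closedBall (0 : X) 1,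
      ‖F x - F y‖ ≤ ‖x - y‖)
    (g : ℕ → X) (hg : ∀ n, g n ∈ closedBall (0 : X) 1)
    (hFg : ∀ n, F (g n) = lp.single 1 n (1 : ℝ))
    (N : ℕ) (a : ℕ → ℝ)
    (hnorm : ‖∑ n ∈ Finset.range N, a n • g n‖ ≤ 1) :
    F (∑ n ∈ Finset.range N, a n • g n)
      = ∑ n ∈ Finset.range N, a n • lp.single 1 n (1 : ℝ) := by
  have hF0 : F 0 = 0 := apply_zero_of_surjOn hbij.surjOn hne
  have hg' : ∀ n, ‖g n‖ ≤ 1 := fun n => mem_closedBall_zero_iff.1 (hg n)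
  rw [norm_sum_smul hne hF0 hbij hg' hFg] at hnorm
  rw [apply_sum_smul hne hF0 hbij hg' hFg _ hnorm]
  simp_rw [← lp.single_smul, smul_eq_mul, mul_one]

theorem nonexpansive_bijection_l1_claim_finite_sums
    {X : Type*} [NormedAddCommGroup X] [NormedSpace ℝ X] [CompleteSpace X]
    (F : X → lp (fun _ : ℕ => ℝ) 1)
    (hbij : Set.BijOn F (closedBall (0 : X) 1)
      (closedBall (0 : lp (fun _ : ℕ => ℝ) 1) 1))
    (hne : ∀ x ∈ closedBall (0 : X) 1, ∀ y ∈ closedBall (0 : X) 1,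
      ‖F x - F y‖ ≤ ‖x - y‖)
    (g : ℕ → X) (hg : ∀ n, g n ∈ closedBall (0 : X) 1)
    (hFg : ∀ n, F (g n) = lp.single 1 n (1 : ℝ))
    (N : ℕ) (a : ℕ → ℝ)
    (hnorm : ‖∑ n ∈ Finset.range N, a n • g n‖ ≤ 1) :
    F (∑ n ∈ Finset.range N, a n • g n)
      = ∑ n ∈ Finset.range N, a n • lp.single 1 n (1 : ℝ) :=
  nonexpansive_bijection_l1_claim_finite_sums_general F hbij hne g hg hFg N a hnorm
end
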